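/- arXiv:2302.14265 — 4 statements merged into one kernel-verified Lean document; each statement's English description precedes it below -/
import Mathlib

section
/- Let T = {(x,y) : 0 ≤ y ≤ x ≤ 1}, let g : [0,1] → ℝ and f : T → ℝ be continuous, and set ḡ = sup_{[0,1]} |g| and f̄ = sup_T |f|. Suppose k : T → ℝ is a continuous solution of the two-dimensional backstepping kernel integral equation k(x,y) = −g(x−y) − ∫₀ʸ f(x−y+ξ, ξ) dξ + ∫₀^{x−y} g(ξ) k(x−y, ξ) dξ + ∫₀ʸ ∫₀^{x−y} f(ξ+η, η) k(x−y+η, ξ+η) dξ dη. Then for all (x,y) ∈ T, |k(x,y)| ≤ (ḡ + f̄) e^{ḡ + f̄}. -/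
open MeasureTheory

/-- the closed triangle T = {(x,y) : 0 ≤ y ≤ x ≤ 1} -/
def T : Set (ℝ × ℝ) := {p | 0 ≤ p.2 ∧ p.2 ≤ p.1 ∧ p.1 ≤ 1}

/-- supremum of |f| over the triangle T -/
noncomputable def supT (f : ℝ → ℝ → ℝ) : ℝ := sSup ((fun p : ℝ × ℝ => |f p.1 p.2|) '' T)

/-- supremum norm on C⁰[0,1] -/
noncomputable def supNorm (f : ℝ → ℝ) : ℝ := sSup ((fun x => |f x|) '' Set.Icc 0 1)

/-- auxiliary bound function for the successive-approximation argument -/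
noncomputable def Qb (A B : ℝ) (n : ℕ) (u : ℝ) : ℝ :=
  (∑ i ∈ Finset.range n, A * A ^ i / (Nat.factorial i) * u ^ i)
    + B * A ^ n / (Nat.factorial n) * u ^ n

lemma Qb_cont (A B : ℝ) (n : ℕ) : Continuous (Qb A B n) := by
  unfold Qb
  exact (continuous_finset_sum _ fun i _ => continuous_const.mul (continuous_pow i)).add
    (continuous_const.mul (continuous_pow n))

lemma Qb_nonneg {A B u : ℝ} (n : ℕ) (hA : 0 ≤ A) (hB : 0 ≤ B) (hu : 0 ≤ u) :
    0 ≤ Qb A B n u := by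
  unfold Qb
  positivity

lemma Qb_rec (A B s : ℝ) (n : ℕ) :
    A + A * ∫ u in (0:ℝ)..s, Qb A B n u = Qb A B (n + 1) s := by
  have hint : ∀ m : ℕ, ∫ u in (0:ℝ)..s, u ^ m = s ^ (m + 1) / ((m : ℝ) + 1) := by
    intro m
    simp [integral_pow]
  unfold Qb
  rw [intervalIntegral.integral_add
      ((by exact continuous_finset_sum _ fun i _ =>
        continuous_const.mul (continuous_pow i) : Continuous (fun u : ℝ =>
          ∑ i ∈ Finset.range n, A * A ^ i / (Nat.factorial i) * u ^ i)).intervalIntegrable _ _)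
      ((by exact continuous_const.mul (continuous_pow n) : Continuous (fun u : ℝ =>
          B * A ^ n / (Nat.factorial n) * u ^ n)).intervalIntegrable _ _),
    intervalIntegral.integral_finset_sum
      (fun i _ => (by exact continuous_const.mul (continuous_pow i) : Continuous (fun u : ℝ =>
          A * A ^ i / (Nat.factorial i) * u ^ i)).intervalIntegrable _ _)]
  simp only [intervalIntegral.integral_const_mul, hint]
  have hterm : ∀ i ∈ Finset.range n,
      A * (A * A ^ i / (Nat.factorial i) * (s ^ (i + 1) / ((i : ℝ) + 1)))
        = A * A ^ (i + 1) / (Nat.factorial (i + 1)) * s ^ (i + 1) := by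
    intro i _
    have h1 : ((Nat.factorial i : ℝ)) ≠ 0 := by
      exact_mod_cast (Nat.factorial_pos i).ne'
    have h2 : ((i : ℝ) + 1) ≠ 0 := by positivity
    rw [Nat.factorial_succ]
    push_cast
    field_simp
    ring
  rw [Finset.sum_range_succ', mul_add, Finset.mul_sum, Finset.sum_congr rfl hterm]
  have h1 : ((Nat.factorial n : ℝ)) ≠ 0 := by
    exact_mod_cast (Nat.factorial_pos n).ne'
  have h2 : ((n : ℝ) + 1) ≠ 0 := by positivity
  rw [Nat.factorial_succ]
  push_cast
  field_simp
  ring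

lemma Qb_le {A B s : ℝ} (n : ℕ) (hA : 0 ≤ A) (hB : 0 ≤ B) (hs : 0 ≤ s) :
    Qb A B n s ≤ A * Real.exp (A * s) + B * ((A * s) ^ n / (Nat.factorial n)) := by
  unfold Qb
  have h1 : ∑ i ∈ Finset.range n, A * A ^ i / (Nat.factorial i) * s ^ i
      = A * ∑ i ∈ Finset.range n, (A * s) ^ i / (Nat.factorial i) := by
    rw [Finset.mul_sum]
    exact Finset.sum_congr rfl fun i _ => by rw [mul_pow]; ring
  have h2 : B * A ^ n / (Nat.factorial n) * s ^ n = B * ((A * s) ^ n / (Nat.factorial n)) := by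
    rw [mul_pow]; ring
  rw [h1, h2]
  have := Real.sum_le_exp_of_nonneg (by positivity : (0:ℝ) ≤ A * s) n
  gcongr

/-- bound |k(x,y)| ≤ (ḡ + f̄) e^{ḡ + f̄} for the solution of the
two-dimensional backstepping kernel integral equation. -/
theorem kernel2d_bound (g : ℝ → ℝ) (f : ℝ → ℝ → ℝ) (k : ℝ → ℝ → ℝ)
    (hg : ContinuousOn g (Set.Icc 0 1))
    (hf : ContinuousOn (fun p : ℝ × ℝ => f p.1 p.2) T)
    (hk : ContinuousOn (fun p : ℝ × ℝ => k p.1 p.2) T)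
    (heq : ∀ x y : ℝ, 0 ≤ y → y ≤ x → x ≤ 1 →
      k x y = -g (x - y) - (∫ ξ in (0:ℝ)..y, f (x - y + ξ) ξ)
        + (∫ ξ in (0:ℝ)..(x - y), g ξ * k (x - y) ξ)
        + ∫ η in (0:ℝ)..y, ∫ ξ in (0:ℝ)..(x - y),
            f (ξ + η) η * k (x - y + η) (ξ + η)) :
    ∀ x y : ℝ, 0 ≤ y → y ≤ x → x ≤ 1 →
      |k x y| ≤ (supNorm g + supT f) * Real.exp (supNorm g + supT f) := by
  -- compactness of T
  have hTclosed : IsClosed T := by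
    have h1 : IsClosed {p : ℝ × ℝ | 0 ≤ p.2} := isClosed_le continuous_const continuous_snd
    have h2 : IsClosed {p : ℝ × ℝ | p.2 ≤ p.1} := isClosed_le continuous_snd continuous_fst
    have h3 : IsClosed {p : ℝ × ℝ | p.1 ≤ 1} := isClosed_le continuous_fst continuous_const
    have : T = {p : ℝ × ℝ | 0 ≤ p.2} ∩ ({p : ℝ × ℝ | p.2 ≤ p.1} ∩ {p : ℝ × ℝ | p.1 ≤ 1}) := by
      ext p; simp [T, Set.mem_inter_iff, and_assoc]
    rw [this]
    exact h1.inter (h2.inter h3)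
  have hTcomp : IsCompact T := by
    refine IsCompact.of_isClosed_subset (isCompact_Icc (a := ((0:ℝ),(0:ℝ))) (b := (1,1)))
      hTclosed ?_
    intro p hp
    obtain ⟨h1, h2, h3⟩ := hp
    exact ⟨⟨le_trans h1 h2, h1⟩, ⟨h3, le_trans h2 h3⟩⟩
  set A := supNorm g + supT f with hAdef
  set B := supT k with hBdef
  have hgb : ∀ z ∈ Set.Icc (0:ℝ) 1, |g z| ≤ supNorm g := fun z hz =>
    le_csSup (isCompact_Icc.bddAbove_image hg.abs) ⟨z, hz, rfl⟩
  have hfb : ∀ p ∈ T, |f p.1 p.2| ≤ supT f := fun p hp =>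
    le_csSup (hTcomp.bddAbove_image hf.abs) ⟨p, hp, rfl⟩
  have hkb : ∀ p ∈ T, |k p.1 p.2| ≤ B := fun p hp =>
    le_csSup (hTcomp.bddAbove_image hk.abs) ⟨p, hp, rfl⟩
  have hg0 : 0 ≤ supNorm g := le_trans (abs_nonneg _) (hgb 0 ⟨le_rfl, zero_le_one⟩)
  have hf0 : 0 ≤ supT f := le_trans (abs_nonneg _) (hfb (0, 0) ⟨le_rfl, le_rfl, zero_le_one⟩)
  have hB0 : 0 ≤ B := le_trans (abs_nonneg _) (hkb (0, 0) ⟨le_rfl, le_rfl, zero_le_one⟩)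
  have hA0 : 0 ≤ A := add_nonneg hg0 hf0
  -- the key induction
  have key : ∀ n : ℕ, ∀ x y : ℝ, 0 ≤ y → y ≤ x → x ≤ 1 → |k x y| ≤ Qb A B n (x - y) := by
    intro n
    induction n with
    | zero =>
      intro x y hy hyx hx1
      have := hkb (x, y) ⟨hy, hyx, hx1⟩
      simpa [Qb] using this
    | succ n ih =>
      intro x y hy hyx hx1
      have hy1 : y ≤ 1 := hyx.trans hx1
      set s := x - y with hs
      have hs0 : 0 ≤ s := sub_nonneg.2 hyx
      have hs1 : s ≤ 1 := by simp only [hs]; linarith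
      have hIcc : Set.uIcc (0:ℝ) s = Set.Icc 0 s := Set.uIcc_of_le hs0
      set I := ∫ u in (0:ℝ)..s, Qb A B n u with hI
      have hIsub : (∫ ξ in (0:ℝ)..s, Qb A B n (s - ξ)) = I := by
        have := intervalIntegral.integral_comp_sub_left (a := (0:ℝ)) (b := s) (Qb A B n) s
        simp only [this, sub_self, sub_zero, hI]
      have hInonneg : 0 ≤ I := by
        rw [hI]
        exact intervalIntegral.integral_nonneg hs0
          (fun u hu => Qb_nonneg n hA0 hB0 hu.1)
      have hQint : IntervalIntegrable (fun ξ => Qb A B n (s - ξ)) volume 0 s :=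
        ((Qb_cont A B n).comp (continuous_const.sub continuous_id)).intervalIntegrable _ _
      -- term 3
      have h3 : |∫ ξ in (0:ℝ)..s, g ξ * k s ξ| ≤ supNorm g * I := by
        have hkcont : ContinuousOn (fun ξ => k s ξ) (Set.Icc 0 s) := by
          refine hk.comp (continuous_const.prodMk continuous_id).continuousOn ?_
          intro ξ hξ
          exact ⟨hξ.1, hξ.2, hs1⟩
        have hgkcont : ContinuousOn (fun ξ => g ξ * k s ξ) (Set.Icc 0 s) :=
          (hg.mono (Set.Icc_subset_Icc le_rfl hs1)).mul hkcont
        have hint1 : IntervalIntegrable (fun ξ => |g ξ * k s ξ|) volume 0 s := by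
          apply ContinuousOn.intervalIntegrable
          rw [hIcc]
          exact hgkcont.abs
        have hint2 : IntervalIntegrable (fun ξ => supNorm g * Qb A B n (s - ξ)) volume 0 s :=
          hQint.const_mul _
        calc |∫ ξ in (0:ℝ)..s, g ξ * k s ξ|
            ≤ ∫ ξ in (0:ℝ)..s, |g ξ * k s ξ| :=
              intervalIntegral.abs_integral_le_integral_abs hs0
          _ ≤ ∫ ξ in (0:ℝ)..s, supNorm g * Qb A B n (s - ξ) := by
              refine intervalIntegral.integral_mono_on hs0 hint1 hint2 ?_
              intro ξ hξ
              rw [abs_mul]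
              have hk1 : |k s ξ| ≤ Qb A B n (s - ξ) := ih s ξ hξ.1 hξ.2 hs1
              exact mul_le_mul (hgb ξ ⟨hξ.1, hξ.2.trans hs1⟩) hk1 (abs_nonneg _) hg0
          _ = supNorm g * I := by rw [intervalIntegral.integral_const_mul, hIsub]
      -- term 2
      have h2 : |∫ ξ in (0:ℝ)..y, f (s + ξ) ξ| ≤ supT f := by
        have := intervalIntegral.norm_integral_le_of_norm_le_const (C := supT f)
          (f := fun ξ => f (s + ξ) ξ) (a := 0) (b := y) ?_
        · rw [Real.norm_eq_abs] at this
          calc |∫ ξ in (0:ℝ)..y, f (s + ξ) ξ| ≤ supT f * |y - 0| := this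
            _ ≤ supT f * 1 := by
                apply mul_le_mul_of_nonneg_left _ hf0
                rw [sub_zero, abs_of_nonneg hy]; exact hy1
            _ = supT f := mul_one _
        · intro ξ hξ
          rw [Set.uIoc_of_le hy] at hξ
          rw [Real.norm_eq_abs]
          exact hfb (s + ξ, ξ) ⟨hξ.1.le, le_add_of_nonneg_left hs0, by
            simp only [hs]; linarith [hξ.2]⟩
      -- term 4
      have h4 : |∫ η in (0:ℝ)..y, ∫ ξ in (0:ℝ)..s, f (ξ + η) η * k (s + η) (ξ + η)|
          ≤ supT f * I := by
        have hbd : ∀ η ∈ Set.uIoc (0:ℝ) y,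
            ‖∫ ξ in (0:ℝ)..s, f (ξ + η) η * k (s + η) (ξ + η)‖ ≤ supT f * I := by
          intro η hη
          rw [Set.uIoc_of_le hy] at hη
          have hη0 : 0 ≤ η := hη.1.le
          have hηy : η ≤ y := hη.2
          have hmem : ∀ ξ ∈ Set.Icc (0:ℝ) s, (ξ + η, η) ∈ T := by
            intro ξ hξ
            exact ⟨hη0, le_add_of_nonneg_left hξ.1, by simp only [hs] at hξ ⊢; linarith [hξ.2]⟩
          have hmem2 : ∀ ξ ∈ Set.Icc (0:ℝ) s, (s + η, ξ + η) ∈ T := by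
            intro ξ hξ
            simp only [Set.mem_Icc] at hξ
            have hm1 : (0:ℝ) ≤ ξ + η := by linarith [hξ.1]
            have hm2 : ξ + η ≤ s + η := by linarith [hξ.2]
            have hm3 : s + η ≤ 1 := by simp only [hs]; linarith
            exact ⟨hm1, hm2, hm3⟩
          have hfcont : ContinuousOn (fun ξ => f (ξ + η) η) (Set.Icc 0 s) :=
            hf.comp ((continuous_id.add continuous_const).prodMk continuous_const).continuousOn
              hmem
          have hkcont : ContinuousOn (fun ξ => k (s + η) (ξ + η)) (Set.Icc 0 s) :=
            hk.comp (continuous_const.prodMk (continuous_id.add continuous_const)).continuousOn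
              hmem2
          have hint1 : IntervalIntegrable (fun ξ => |f (ξ + η) η * k (s + η) (ξ + η)|)
              volume 0 s := by
            apply ContinuousOn.intervalIntegrable
            rw [hIcc]
            exact (hfcont.mul hkcont).abs
          have hint2 : IntervalIntegrable (fun ξ => supT f * Qb A B n (s - ξ)) volume 0 s :=
            hQint.const_mul _
          rw [Real.norm_eq_abs]
          calc |∫ ξ in (0:ℝ)..s, f (ξ + η) η * k (s + η) (ξ + η)|
              ≤ ∫ ξ in (0:ℝ)..s, |f (ξ + η) η * k (s + η) (ξ + η)| :=
                intervalIntegral.abs_integral_le_integral_abs hs0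
            _ ≤ ∫ ξ in (0:ℝ)..s, supT f * Qb A B n (s - ξ) := by
                refine intervalIntegral.integral_mono_on hs0 hint1 hint2 ?_
                intro ξ hξ
                rw [abs_mul]
                have hk1 : |k (s + η) (ξ + η)| ≤ Qb A B n (s - ξ) := by
                  have h := ih (s + η) (ξ + η) (by linarith [hξ.1]) (by linarith [hξ.2])
                    (hmem2 ξ hξ).2.2
                  rwa [show s + η - (ξ + η) = s - ξ by ring] at h
                exact mul_le_mul (hfb (ξ + η, η) (hmem ξ hξ)) hk1 (abs_nonneg _) hf0
            _ = supT f * I := by rw [intervalIntegral.integral_const_mul, hIsub]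
        have := intervalIntegral.norm_integral_le_of_norm_le_const hbd
        rw [Real.norm_eq_abs] at this
        calc |∫ η in (0:ℝ)..y, ∫ ξ in (0:ℝ)..s, f (ξ + η) η * k (s + η) (ξ + η)|
            ≤ supT f * I * |y - 0| := this
          _ ≤ supT f * I * 1 := by
              apply mul_le_mul_of_nonneg_left _ (mul_nonneg hf0 hInonneg)
              rw [sub_zero, abs_of_nonneg hy]; exact hy1
          _ = supT f * I := mul_one _
      -- term 1
      have h1 : |g s| ≤ supNorm g := hgb s ⟨hs0, hs1⟩
      -- combine
      have hk_eq := heq x y hy hyx hx1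
      rw [← hs] at hk_eq
      have habs : |k x y| ≤ |g s| + |∫ ξ in (0:ℝ)..y, f (s + ξ) ξ|
          + |∫ ξ in (0:ℝ)..s, g ξ * k s ξ|
          + |∫ η in (0:ℝ)..y, ∫ ξ in (0:ℝ)..s, f (ξ + η) η * k (s + η) (ξ + η)| := by
        rw [hk_eq]
        calc |(-g s - (∫ ξ in (0:ℝ)..y, f (s + ξ) ξ)
              + (∫ ξ in (0:ℝ)..s, g ξ * k s ξ)
              + ∫ η in (0:ℝ)..y, ∫ ξ in (0:ℝ)..s, f (ξ + η) η * k (s + η) (ξ + η))|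
            ≤ |(-g s - (∫ ξ in (0:ℝ)..y, f (s + ξ) ξ)
              + (∫ ξ in (0:ℝ)..s, g ξ * k s ξ))|
              + |∫ η in (0:ℝ)..y, ∫ ξ in (0:ℝ)..s, f (ξ + η) η * k (s + η) (ξ + η)| :=
              abs_add_le _ _
          _ ≤ (|(-g s - (∫ ξ in (0:ℝ)..y, f (s + ξ) ξ))|
              + |∫ ξ in (0:ℝ)..s, g ξ * k s ξ|)
              + |∫ η in (0:ℝ)..y, ∫ ξ in (0:ℝ)..s, f (ξ + η) η * k (s + η) (ξ + η)| := by
              gcongr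
              exact abs_add_le _ _
          _ ≤ |g s| + |∫ ξ in (0:ℝ)..y, f (s + ξ) ξ|
              + |∫ ξ in (0:ℝ)..s, g ξ * k s ξ|
              + |∫ η in (0:ℝ)..y, ∫ ξ in (0:ℝ)..s, f (ξ + η) η * k (s + η) (ξ + η)| := by
              have := abs_sub (-g s) (∫ ξ in (0:ℝ)..y, f (s + ξ) ξ)
              rw [abs_neg] at this
              linarith
      have hfinal : |k x y| ≤ A + A * I := by
        have : supNorm g + supT f + (supNorm g * I + supT f * I) = A + A * I := by
          rw [hAdef]; ring
        linarith
      calc |k x y| ≤ A + A * I := hfinal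
        _ = Qb A B (n + 1) s := Qb_rec A B s n
  -- pass to the limit
  intro x y hy hyx hx1
  set s := x - y with hs
  have hs0 : 0 ≤ s := sub_nonneg.2 hyx
  have hs1 : s ≤ 1 := by simp only [hs]; linarith
  have hbound : ∀ n : ℕ, |k x y| ≤ A * Real.exp A + B * ((A * s) ^ n / (Nat.factorial n)) := by
    intro n
    refine (key n x y hy hyx hx1).trans ?_
    refine (Qb_le n hA0 hB0 hs0).trans ?_
    have hAs : A * s ≤ A := by nlinarith
    have : Real.exp (A * s) ≤ Real.exp A := Real.exp_le_exp.2 hAs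
    gcongr
  have htend : Filter.Tendsto (fun n : ℕ => A * Real.exp A + B * ((A * s) ^ n / (Nat.factorial n)))
      Filter.atTop (nhds (A * Real.exp A)) := by
    have h0 := (FloorSemiring.tendsto_pow_div_factorial_atTop (A * s)).const_mul B
    have := Filter.Tendsto.const_add (A * Real.exp A) h0
    simpa using this
  exact ge_of_tendsto' htend hbound
end

section
/- Let T = {(x,y) : 0 ≤ y ≤ x ≤ 1}, let g ∈ C¹([0,1]) and f ∈ C¹(T), and set ḡ = sup |g|, ḡ' = sup |g'|, f̄ = sup_T |f|, f̄_x = sup_T |f_x|. Let k : T → ℝ be a continuously differentiable solution of the two-dimensional backstepping kernel integral equation k(x,y) = −g(x−y) − ∫₀ʸ f(x−y+ξ, ξ) dξ + ∫₀^{x−y} g(ξ) k(x−y, ξ) dξ + ∫₀ʸ ∫₀^{x−y} f(ξ+η, η) k(x−y+η, ξ+η) dξ dη. Then for all (x,y) ∈ T, |∂k/∂x (x,y)| ≤ (f̄_x + φ̄₀) e^{ḡ + f̄}, where φ̄₀ = ḡ' + (ḡ + f̄) k̄ and k̄ = (ḡ + f̄) e^{ḡ + f̄}. -/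
open MeasureTheory

/-- k̄ = (ḡ + f̄) e^{ḡ + f̄} -/
noncomputable def kbar (gb fb : ℝ) : ℝ := (gb + fb) * Real.exp (gb + fb)

/-- φ̄₀ = ḡ' + (ḡ + f̄) k̄ -/
noncomputable def phibar (gb gb' fb : ℝ) : ℝ := gb' + (gb + fb) * kbar gb fb


open Set intervalIntegral Finset Function

noncomputable section

lemma mem_T {a b : ℝ} (h1 : 0 ≤ b) (h2 : b ≤ a) (h3 : a ≤ 1) : ((a, b) : ℝ × ℝ) ∈ T :=
  ⟨h1, h2, h3⟩

lemma tietze_ext {X : Type*} [TopologicalSpace X] [NormalSpace X] {s : Set X} (hs : IsClosed s)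
    (f : X → ℝ) (hf : ContinuousOn f s) :
    ∃ F : X → ℝ, Continuous F ∧ ∀ p ∈ s, F p = f p := by
  obtain ⟨G, hG⟩ := ContinuousMap.exists_restrict_eq (Y := ℝ) hs
    ⟨fun p : s => f p, hf.restrict⟩
  exact ⟨G, G.continuous, fun p hp => by
    have := congrFun (congrArg ContinuousMap.toFun hG) ⟨p, hp⟩
    simpa using this⟩

lemma isClosed_T : IsClosed T := by
  have : T = (fun p : ℝ × ℝ => p.2) ⁻¹' (Ici 0) ∩ ((fun p : ℝ × ℝ => p.1 - p.2) ⁻¹' (Ici 0)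
      ∩ (fun p : ℝ × ℝ => p.1) ⁻¹' (Iic 1)) := by
    ext p
    simp only [T, Set.mem_setOf_eq, Set.mem_inter_iff, Set.mem_preimage, Set.mem_Ici, Set.mem_Iic]
    constructor
    · rintro ⟨h1, h2, h3⟩; exact ⟨h1, by linarith, h3⟩
    · rintro ⟨h1, h2, h3⟩; exact ⟨h1, by linarith, h3⟩
  rw [this]
  exact ((isClosed_Ici.preimage continuous_snd)).inter
    (((isClosed_Ici.preimage (continuous_fst.sub continuous_snd))).inter
      (isClosed_Iic.preimage continuous_fst))

lemma isCompact_T : IsCompact T := by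
  refine (isCompact_Icc (a := ((0:ℝ),(0:ℝ))) (b := (1,1))).of_isClosed_subset isClosed_T ?_
  rintro ⟨x, y⟩ ⟨h1, h2, h3⟩
  simp only [Set.mem_Icc, Prod.mk_le_mk] at *
  exact ⟨⟨by linarith, h1⟩, ⟨h3, by linarith⟩⟩


lemma my_gronwall {χ : ℝ → ℝ} {C L : ℝ} (hC : 0 ≤ C) (hL : 0 ≤ L)
    (hmono : MonotoneOn χ (Set.Icc 0 1)) (hMnn : 0 ≤ χ 1)
    (hrec : ∀ u ∈ Set.Icc (0:ℝ) 1, χ u ≤ C + L * ∫ s in (0:ℝ)..u, χ s) :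
    ∀ u ∈ Set.Icc (0:ℝ) 1, χ u ≤ C * Real.exp L := by
  set M := χ 1 with hM
  have hint : ∀ u ∈ Set.Icc (0:ℝ) 1, IntervalIntegrable χ volume 0 u := by
    intro u hu
    exact (hmono.mono (by rw [Set.uIcc_of_le hu.1]; exact Set.Icc_subset_Icc le_rfl hu.2)
      : MonotoneOn χ (Set.uIcc 0 u)).intervalIntegrable
  have key : ∀ n : ℕ, ∀ u ∈ Set.Icc (0:ℝ) 1,
      χ u ≤ C * (∑ i ∈ Finset.range n, L ^ i * u ^ i / i.factorial)
        + M * (L ^ n * u ^ n / n.factorial) := by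
    intro n
    induction n with
    | zero =>
      intro u hu
      simpa using hmono hu (by norm_num) hu.2
    | succ n ih =>
      intro u hu
      have hbd : ∀ s ∈ Set.Icc (0:ℝ) u, χ s ≤
          C * (∑ i ∈ Finset.range n, L ^ i * s ^ i / i.factorial)
            + M * (L ^ n * s ^ n / n.factorial) := fun s hs =>
        ih s ⟨hs.1, hs.2.trans hu.2⟩
      have hpint : IntervalIntegrable (fun s => C * (∑ i ∈ Finset.range n,
          L ^ i * s ^ i / i.factorial) + M * (L ^ n * s ^ n / n.factorial)) volume 0 u := by
        apply Continuous.intervalIntegrable; fun_prop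
      have hInt : (∫ s in (0:ℝ)..u, χ s) ≤
          ∫ s in (0:ℝ)..u, (C * (∑ i ∈ Finset.range n, L ^ i * s ^ i / i.factorial)
            + M * (L ^ n * s ^ n / n.factorial)) := by
        apply intervalIntegral.integral_mono_on hu.1 (hint u hu) hpint hbd
      have hfac : ∀ i : ℕ, ((i.factorial : ℝ)) ≠ 0 := fun i => by positivity
      have hcalc : (∫ s in (0:ℝ)..u, (C * (∑ i ∈ Finset.range n,
          L ^ i * s ^ i / i.factorial) + M * (L ^ n * s ^ n / n.factorial)))
          = C * (∑ i ∈ Finset.range n, L ^ i * u ^ (i+1) / ((i+1) * i.factorial))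
            + M * (L ^ n * u ^ (n+1) / ((n+1) * n.factorial)) := by
        rw [intervalIntegral.integral_add (by apply Continuous.intervalIntegrable; fun_prop)
          (by apply Continuous.intervalIntegrable; fun_prop)]
        rw [intervalIntegral.integral_const_mul, intervalIntegral.integral_const_mul]
        congr 1
        · congr 1
          rw [intervalIntegral.integral_finset_sum]
          · apply Finset.sum_congr rfl
            intro i _
            have : (fun s => L ^ i * s ^ i / i.factorial)
                = fun s => (L ^ i / i.factorial) * s ^ i := by
              ext s; ring
            rw [this, intervalIntegral.integral_const_mul, integral_pow]
            push_cast
            rw [zero_pow (by positivity : i+1 ≠ 0)]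
            field_simp
            ring_nf
          · intro i _
            apply Continuous.intervalIntegrable; fun_prop
        · have : (fun s => L ^ n * s ^ n / n.factorial)
              = fun s => (L ^ n / n.factorial) * s ^ n := by
            ext s; ring
          rw [this, intervalIntegral.integral_const_mul, integral_pow]
          push_cast
          rw [zero_pow (by positivity : n+1 ≠ 0)]
          field_simp
          ring_nf
      have e1 : ∑ x ∈ Finset.range n, L^(x+1) * u^(x+1) / (((x:ℝ)+1) * x.factorial)
          = L * ∑ i ∈ Finset.range n, L^i * u^(i+1) / (((i:ℝ)+1) * i.factorial) := by
        rw [Finset.mul_sum]; apply Finset.sum_congr rfl; intro i _; ring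
      calc χ u ≤ C + L * ∫ s in (0:ℝ)..u, χ s := hrec u hu
        _ ≤ C + L * (C * (∑ i ∈ Finset.range n, L ^ i * u ^ (i+1) / ((i+1) * i.factorial))
            + M * (L ^ n * u ^ (n+1) / ((n+1) * n.factorial))) := by
            rw [← hcalc]; nlinarith [hInt]
        _ = C * (∑ i ∈ Finset.range (n+1), L ^ i * u ^ i / i.factorial)
            + M * (L ^ (n+1) * u ^ (n+1) / (n+1).factorial) := by
            rw [Finset.sum_range_succ']
            simp only [Nat.factorial_succ, pow_zero, Nat.factorial_zero, Nat.cast_one,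
              mul_one, one_mul, div_one]
            push_cast
            rw [mul_add C, Finset.mul_sum, Finset.mul_sum]
            rw [Finset.sum_congr rfl (fun i _ => by ring :
              ∀ i ∈ Finset.range n, C * (L ^ (i+1) * u ^ (i + 1) / ((↑i + 1) * ↑(Nat.factorial i)))
                = L * (C * (L ^ i * u ^ (i + 1) / ((↑i + 1) * ↑(Nat.factorial i)))))]
            rw [mul_add L, Finset.mul_sum]
            ring

  intro u hu
  have hlim : Filter.Tendsto (fun n : ℕ => C * Real.exp L + M * (L ^ n / n.factorial))
      Filter.atTop (nhds (C * Real.exp L + M * 0)) :=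
    Filter.Tendsto.const_add _ ((FloorSemiring.tendsto_pow_div_factorial_atTop L).const_mul M)
  rw [mul_zero, add_zero] at hlim
  refine ge_of_tendsto' hlim fun n => ?_
  have hterm : ∀ i : ℕ, L ^ i * u ^ i / (i.factorial : ℝ) ≤ L ^ i / i.factorial := by
    intro i
    have hu1 : u ^ i ≤ 1 := pow_le_one₀ hu.1 hu.2
    have h0 : (0:ℝ) ≤ L ^ i := pow_nonneg hL i
    have hfp : (0:ℝ) < i.factorial := by positivity
    rw [div_le_div_iff_of_pos_right hfp]
    nlinarith
  have h1 : ∑ i ∈ Finset.range n, L ^ i * u ^ i / (i.factorial : ℝ) ≤ Real.exp L :=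
    le_trans (Finset.sum_le_sum fun i _ => hterm i) (Real.sum_le_exp_of_nonneg hL n)
  calc χ u ≤ C * (∑ i ∈ Finset.range n, L ^ i * u ^ i / i.factorial)
        + M * (L ^ n * u ^ n / n.factorial) := key n u hu
    _ ≤ C * Real.exp L + M * (L ^ n / n.factorial) :=
      add_le_add (mul_le_mul_of_nonneg_left h1 hC)
        (mul_le_mul_of_nonneg_left (hterm n) hMnn)



lemma finite_restrict_Ioc (a b : ℝ) : IsFiniteMeasure (volume.restrict (Set.Ioc a b)) := by
  constructor
  rw [Measure.restrict_apply_univ]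
  exact measure_Ioc_lt_top

lemma rect_swap (Q : ℝ → ℝ → ℝ) {y v : ℝ} (hy : 0 ≤ y) (hv : 0 ≤ v)
    (hQc : Continuous fun p : ℝ × ℝ => Q p.1 p.2) :
    ∫ a in (0:ℝ)..y, ∫ b in (0:ℝ)..v, Q a b = ∫ b in (0:ℝ)..v, ∫ a in (0:ℝ)..y, Q a b := by
  have hInt : Integrable (Function.uncurry Q)
      ((volume.restrict (Set.Ioc 0 y)).prod (volume.restrict (Set.Ioc 0 v))) := by
    rw [Measure.prod_restrict]
    have : IntegrableOn (Function.uncurry Q) (Set.Icc 0 y ×ˢ Set.Icc 0 v) volume :=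
      (hQc.continuousOn).integrableOn_compact (isCompact_Icc.prod isCompact_Icc)
    exact this.mono_set (Set.prod_mono Set.Ioc_subset_Icc_self Set.Ioc_subset_Icc_self)
  rw [intervalIntegral.integral_of_le hy, intervalIntegral.integral_of_le hv]
  simp only [intervalIntegral.integral_of_le hy, intervalIntegral.integral_of_le hv]
  exact MeasureTheory.integral_integral_swap hInt

lemma tri_swap (W : ℝ → ℝ → ℝ) {v : ℝ} (hv : 0 ≤ v)
    (hW : Continuous fun p : ℝ × ℝ => W p.1 p.2) :
    ∫ ξ in (0:ℝ)..v, ∫ s in ξ..v, W s ξ = ∫ s in (0:ℝ)..v, ∫ ξ in (0:ℝ)..s, W s ξ := by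
  haveI := finite_restrict_Ioc 0 v
  set U : ℝ → ℝ → ℝ := fun ξ s => if ξ ≤ s then W s ξ else 0 with hU
  have hUm : AEStronglyMeasurable (Function.uncurry U)
      ((volume.restrict (Set.Ioc 0 v)).prod (volume.restrict (Set.Ioc 0 v))) := by
    have : Function.uncurry U = Set.indicator {p : ℝ × ℝ | p.1 ≤ p.2}
        (fun p => W p.2 p.1) := by
      ext p
      by_cases h : p.1 ≤ p.2
      · simp [Function.uncurry, U, h, Set.indicator_of_mem, Set.mem_setOf_eq]
      · simp [Function.uncurry, U, h, Set.indicator_of_notMem, Set.mem_setOf_eq]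
    rw [this]
    exact ((hW.comp (continuous_snd.prodMk continuous_fst)).stronglyMeasurable.indicator
      (measurableSet_le measurable_fst measurable_snd)).aestronglyMeasurable
  obtain ⟨C, hC⟩ := (isCompact_Icc.prod (isCompact_Icc : IsCompact (Set.Icc (0:ℝ) v))).exists_bound_of_continuousOn
    (hW.comp (continuous_snd.prodMk continuous_fst)).continuousOn
  have hUInt : Integrable (Function.uncurry U)
      ((volume.restrict (Set.Ioc 0 v)).prod (volume.restrict (Set.Ioc 0 v))) := by
    refine ⟨hUm, ?_⟩
    apply MeasureTheory.HasFiniteIntegral.of_bounded (C := |C|)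
    rw [Measure.prod_restrict]
    refine (MeasureTheory.ae_restrict_iff' ((measurableSet_Ioc).prod measurableSet_Ioc)).2
      (Filter.Eventually.of_forall fun p hp => ?_)
    rcases hp with ⟨h1, h2⟩
    have hmem : p ∈ Set.Icc (0:ℝ) v ×ˢ Set.Icc (0:ℝ) v :=
      ⟨⟨h1.1.le, h1.2⟩, ⟨h2.1.le, h2.2⟩⟩
    by_cases h : p.1 ≤ p.2
    · have := hC p hmem
      simp only [Function.uncurry, U, h, if_true]
      calc ‖W p.2 p.1‖ ≤ C := this
        _ ≤ |C| := le_abs_self C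
    · simp only [Function.uncurry, U, h, if_false]
      simp only [norm_zero]
      positivity
  have step1 : ∀ ξ ∈ Set.Ioc (0:ℝ) v, (∫ s in Set.Ioc (0:ℝ) v, U ξ s) = ∫ s in ξ..v, W s ξ := by
    intro ξ hξ
    have : (fun s => U ξ s) = Set.indicator (Set.Ici ξ) (fun s => W s ξ) := by
      ext s
      by_cases h : ξ ≤ s
      · simp [U, h, Set.indicator_of_mem, Set.mem_Ici]
      · simp [U, h, Set.indicator_of_notMem, Set.mem_Ici]
    rw [this, MeasureTheory.integral_indicator measurableSet_Ici,
      Measure.restrict_restrict measurableSet_Ici]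
    have hset : Set.Ici ξ ∩ Set.Ioc 0 v = Set.Icc ξ v := by
      ext s
      simp only [Set.mem_inter_iff, Set.mem_Ici, Set.mem_Ioc, Set.mem_Icc]
      constructor
      · rintro ⟨h1, h2, h3⟩; exact ⟨h1, h3⟩
      · rintro ⟨h1, h2⟩; exact ⟨h1, lt_of_lt_of_le hξ.1 h1, h2⟩
    rw [hset, MeasureTheory.integral_Icc_eq_integral_Ioc,
      ← intervalIntegral.integral_of_le hξ.2]
  have step2 : ∀ s ∈ Set.Ioc (0:ℝ) v, (∫ ξ in Set.Ioc (0:ℝ) v, U ξ s) = ∫ ξ in (0:ℝ)..s, W s ξ := by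
    intro s hs
    have : (fun ξ => U ξ s) = Set.indicator (Set.Iic s) (fun ξ => W s ξ) := by
      ext ξ
      by_cases h : ξ ≤ s
      · simp [U, h, Set.indicator_of_mem, Set.mem_Iic]
      · simp [U, h, Set.indicator_of_notMem, Set.mem_Iic]
    rw [this, MeasureTheory.integral_indicator measurableSet_Iic,
      Measure.restrict_restrict measurableSet_Iic]
    have hset : Set.Iic s ∩ Set.Ioc 0 v = Set.Ioc 0 s := by
      ext ξ
      simp only [Set.mem_inter_iff, Set.mem_Iic, Set.mem_Ioc]
      constructor
      · rintro ⟨h1, h2, h3⟩; exact ⟨h2, h1⟩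
      · rintro ⟨h1, h2⟩; exact ⟨h2, h1, h2.trans hs.2⟩
    rw [hset, ← intervalIntegral.integral_of_le hs.1.le]
  calc ∫ ξ in (0:ℝ)..v, ∫ s in ξ..v, W s ξ
      = ∫ ξ in Set.Ioc (0:ℝ) v, ∫ s in ξ..v, W s ξ := intervalIntegral.integral_of_le hv
    _ = ∫ ξ in Set.Ioc (0:ℝ) v, ∫ s in Set.Ioc (0:ℝ) v, U ξ s := by
        refine MeasureTheory.setIntegral_congr_fun measurableSet_Ioc fun ξ hξ => (step1 ξ hξ).symm
    _ = ∫ s in Set.Ioc (0:ℝ) v, ∫ ξ in Set.Ioc (0:ℝ) v, U ξ s :=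
        MeasureTheory.integral_integral_swap hUInt
    _ = ∫ s in Set.Ioc (0:ℝ) v, ∫ ξ in (0:ℝ)..s, W s ξ :=
        MeasureTheory.setIntegral_congr_fun measurableSet_Ioc fun s hs => step2 s hs
    _ = ∫ s in (0:ℝ)..v, ∫ ξ in (0:ℝ)..s, W s ξ := (intervalIntegral.integral_of_le hv).symm


lemma cont_param_primitive {X : Type*} [TopologicalSpace X] [FirstCountableTopology X]
    [LocallyCompactSpace X] (W : X → ℝ → ℝ)
    (hW : Continuous fun q : X × ℝ => W q.1 q.2) :
    Continuous fun p : X × ℝ => ∫ t in (0:ℝ)..p.2, W p.1 t := by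
  rw [continuous_iff_continuousAt]
  rintro ⟨x₀, b₀⟩
  set b : ℝ := |b₀| + 1 with hb
  have hab : -b < b := by
    have : 0 ≤ |b₀| := abs_nonneg b₀
    linarith
  have hb₀ : b₀ ∈ Set.Ioo (-b) b := by
    constructor
    · have := neg_abs_le b₀; linarith
    · have := le_abs_self b₀; linarith
  have ha₀ : (0:ℝ) ∈ Set.Ioo (-b) b := by
    have : 0 ≤ |b₀| := abs_nonneg b₀
    constructor <;> [linarith; linarith]
  obtain ⟨K, hKc, hKn⟩ := exists_compact_mem_nhds x₀
  obtain ⟨C, hC⟩ := (hKc.prod (isCompact_Icc (a := -b) (b := b))).exists_bound_of_continuousOn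
    hW.continuousOn
  refine intervalIntegral.continuousAt_parametric_primitive_of_dominated
    (fun _ => C) (-b) b (fun x => (hW.comp (Continuous.prodMk_right x)).aestronglyMeasurable) ?_
    intervalIntegrable_const ?_ ha₀ hb₀ (measure_singleton b₀)
  · filter_upwards [hKn] with x hx
    refine (MeasureTheory.ae_restrict_iff' measurableSet_uIoc).2
      (Filter.Eventually.of_forall fun t ht => ?_)
    refine hC (x, t) ⟨hx, ?_⟩
    have : Set.uIoc (-b) b ⊆ Set.Icc (-b) b := by
      rw [Set.uIoc_of_le hab.le]
      exact Set.Ioc_subset_Icc_self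
    exact this ht
  · exact Filter.Eventually.of_forall fun t =>
      (hW.comp (continuous_id.prodMk continuous_const)).continuousAt


lemma theta_intble {θ : ℝ → ℝ} (hmono : MonotoneOn θ (Set.Icc 0 1)) {a b : ℝ}
    (ha : 0 ≤ a) (hab : a ≤ b) (hb : b ≤ 1) : IntervalIntegrable θ volume a b :=
  ((hmono.mono (by rw [Set.uIcc_of_le hab]; exact Set.Icc_subset_Icc ha hb))
    : MonotoneOn θ (Set.uIcc a b)).intervalIntegrable

lemma theta_int_mono {θ : ℝ → ℝ} (hmono : MonotoneOn θ (Set.Icc 0 1))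
    (hnn : ∀ t ∈ Set.Icc (0:ℝ) 1, 0 ≤ θ t) {v u : ℝ} (hv : 0 ≤ v) (hvu : v ≤ u) (hu : u ≤ 1) :
    (∫ s in (0:ℝ)..v, θ s) ≤ ∫ s in (0:ℝ)..u, θ s := by
  have h1 := theta_intble hmono hv hvu hu
  have h2 := theta_intble hmono le_rfl (hv.trans hvu) hu
  have h3 := theta_intble hmono le_rfl hv (hvu.trans hu)
  rw [← intervalIntegral.integral_add_adjacent_intervals h3 h1]
  have : 0 ≤ ∫ s in v..u, θ s :=
    intervalIntegral.integral_nonneg hvu fun t ht => hnn t ⟨hv.trans ht.1, ht.2.trans hu⟩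
  linarith

lemma theta_int_nonneg {θ : ℝ → ℝ} (hnn : ∀ t ∈ Set.Icc (0:ℝ) 1, 0 ≤ θ t) {u : ℝ}
    (hu0 : 0 ≤ u) (hu : u ≤ 1) : 0 ≤ ∫ s in (0:ℝ)..u, θ s :=
  intervalIntegral.integral_nonneg hu0 fun t ht => hnn t ⟨ht.1, ht.2.trans hu⟩

lemma conv_bound {θ : ℝ → ℝ} (hmono : MonotoneOn θ (Set.Icc 0 1))
    (hnn : ∀ t ∈ Set.Icc (0:ℝ) 1, 0 ≤ θ t) {v u : ℝ} (hv : 0 ≤ v) (hvu : v ≤ u) (hu : u ≤ 1)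
    {A : ℝ → ℝ} (hAc : ContinuousOn A (Set.Icc 0 v)) {c : ℝ} (hc : 0 ≤ c)
    (hbd : ∀ ξ ∈ Set.Icc (0:ℝ) v, |A ξ| ≤ c * θ (v - ξ)) :
    |∫ ξ in (0:ℝ)..v, A ξ| ≤ c * ∫ s in (0:ℝ)..u, θ s := by
  have hAi : IntervalIntegrable A volume 0 v :=
    (by rwa [Set.uIcc_of_le hv] : ContinuousOn A (Set.uIcc 0 v)).intervalIntegrable
  have hθAnti : AntitoneOn (fun ξ => θ (v - ξ)) (Set.uIcc 0 v) := by
    rw [Set.uIcc_of_le hv]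
    intro a ha b hb hab
    exact hmono ⟨by linarith [ha.1, ha.2, hb.1, hb.2, hvu, hu], by linarith [ha.1, ha.2, hb.1, hb.2, hvu, hu]⟩
      ⟨by linarith [ha.1, ha.2, hb.1, hb.2, hvu, hu], by linarith [ha.1, ha.2, hb.1, hb.2, hvu, hu]⟩ (by linarith)
  have hθi : IntervalIntegrable (fun ξ => c * θ (v - ξ)) volume 0 v :=
    (hθAnti.intervalIntegrable).const_mul c
  calc |∫ ξ in (0:ℝ)..v, A ξ| ≤ ∫ ξ in (0:ℝ)..v, |A ξ| :=
        intervalIntegral.abs_integral_le_integral_abs hv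
    _ ≤ ∫ ξ in (0:ℝ)..v, c * θ (v - ξ) :=
        intervalIntegral.integral_mono_on hv hAi.abs hθi hbd
    _ = c * ∫ ξ in (0:ℝ)..v, θ (v - ξ) := intervalIntegral.integral_const_mul _ _
    _ = c * ∫ s in (0:ℝ)..v, θ s := by
        rw [intervalIntegral.integral_comp_sub_left θ v]
        norm_num
    _ ≤ c * ∫ s in (0:ℝ)..u, θ s :=
        mul_le_mul_of_nonneg_left (theta_int_mono hmono hnn hv hvu hu) hc




noncomputable def sliceSup (Φ : ℝ × ℝ → ℝ) (u : ℝ) : ℝ :=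
  sSup (Φ '' (T ∩ {p | p.1 - p.2 ≤ u}))

lemma origin_mem_slice {u : ℝ} (hu : 0 ≤ u) : ((0:ℝ), (0:ℝ)) ∈ T ∩ {p : ℝ × ℝ | p.1 - p.2 ≤ u} :=
  ⟨⟨le_rfl, le_rfl, zero_le_one⟩, by simpa using hu⟩

lemma sliceSup_bddAbove {Φ : ℝ × ℝ → ℝ} (hΦ : Continuous Φ) (u : ℝ) :
    BddAbove (Φ '' (T ∩ {p | p.1 - p.2 ≤ u})) :=
  ((isCompact_T.image_of_continuousOn hΦ.continuousOn).bddAbove).mono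
    (Set.image_mono Set.inter_subset_left)

lemma le_sliceSup {Φ : ℝ × ℝ → ℝ} (hΦ : Continuous Φ) {p : ℝ × ℝ} (hp : p ∈ T) {u : ℝ}
    (hpu : p.1 - p.2 ≤ u) : Φ p ≤ sliceSup Φ u :=
  le_csSup (sliceSup_bddAbove hΦ u) ⟨p, ⟨hp, hpu⟩, rfl⟩

lemma sliceSup_mono {Φ : ℝ × ℝ → ℝ} (hΦ : Continuous Φ) :
    MonotoneOn (sliceSup Φ) (Set.Icc 0 1) := by
  intro a ha b hb hab
  apply csSup_le_csSup (sliceSup_bddAbove hΦ b)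
  · exact ⟨_, Set.mem_image_of_mem Φ (origin_mem_slice ha.1)⟩
  · exact Set.image_mono (Set.inter_subset_inter le_rfl
      fun p hp => le_trans hp hab)

lemma sliceSup_nonneg {Φ : ℝ × ℝ → ℝ} (hΦ : Continuous Φ) (hΦnn : ∀ p, 0 ≤ Φ p) {u : ℝ}
    (hu : 0 ≤ u) : 0 ≤ sliceSup Φ u :=
  le_trans (hΦnn _) (le_sliceSup hΦ (origin_mem_slice hu).1 (by simpa using hu))

lemma sliceSup_le {Φ : ℝ × ℝ → ℝ} {u B : ℝ} (hu : 0 ≤ u)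
    (h : ∀ p ∈ T, p.1 - p.2 ≤ u → Φ p ≤ B) : sliceSup Φ u ≤ B := by
  apply csSup_le ⟨_, Set.mem_image_of_mem Φ (origin_mem_slice hu)⟩
  rintro b ⟨p, ⟨hpT, hpu⟩, rfl⟩
  exact h p hpT hpu
lemma K_bound (G : ℝ → ℝ) (F K : ℝ → ℝ → ℝ) (hGc : Continuous G)
    (hFc : Continuous fun p : ℝ × ℝ => F p.1 p.2) (hKc : Continuous fun p : ℝ × ℝ => K p.1 p.2)
    {gb fb : ℝ}
    (hgb : ∀ t ∈ Set.Icc (0:ℝ) 1, |G t| ≤ gb) (hfb : ∀ p ∈ T, |F p.1 p.2| ≤ fb)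
    (heq : ∀ x y : ℝ, 0 ≤ y → y ≤ x → x ≤ 1 →
      K x y = -G (x - y) - (∫ ξ in (0:ℝ)..y, F (x - y + ξ) ξ)
        + (∫ ξ in (0:ℝ)..(x - y), G ξ * K (x - y) ξ)
        + ∫ η in (0:ℝ)..y, ∫ ξ in (0:ℝ)..(x - y), F (ξ + η) η * K (x - y + η) (ξ + η)) :
    ∀ p ∈ T, |K p.1 p.2| ≤ kbar gb fb := by
  have hgb0 : 0 ≤ gb := (abs_nonneg _).trans (hgb 0 ⟨le_rfl, zero_le_one⟩)
  have hfb0 : 0 ≤ fb := (abs_nonneg _).trans (hfb (0,0) ⟨le_rfl, le_rfl, zero_le_one⟩)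
  set Φ : ℝ × ℝ → ℝ := fun p => |K p.1 p.2| with hΦdef
  have hΦc : Continuous Φ := hKc.abs
  have hΦnn : ∀ p, 0 ≤ Φ p := fun p => abs_nonneg _
  set θ : ℝ → ℝ := sliceSup Φ with hθdef
  have hθm : MonotoneOn θ (Set.Icc 0 1) := sliceSup_mono hΦc
  have hθnn : ∀ t ∈ Set.Icc (0:ℝ) 1, 0 ≤ θ t := fun t ht => sliceSup_nonneg hΦc hΦnn ht.1
  have hrec : ∀ u ∈ Set.Icc (0:ℝ) 1, θ u ≤ (gb + fb) + (gb + fb) * ∫ s in (0:ℝ)..u, θ s := by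
    rintro u ⟨hu0, hu1⟩
    apply sliceSup_le hu0
    rintro ⟨x, y⟩ ⟨hy0, hyx, hx1⟩ hdiff
    have hy0 : (0:ℝ) ≤ y := hy0
    have hyx : y ≤ x := hyx
    have hx1 : x ≤ 1 := hx1
    have hdiff' : x - y ≤ u := hdiff
    set v : ℝ := x - y with hvdef
    have hv0 : 0 ≤ v := by simp only [hvdef]; linarith
    have hvu : v ≤ u := hdiff'
    have hy1 : y ≤ 1 := hyx.trans hx1
    have hIθnn : 0 ≤ ∫ s in (0:ℝ)..u, θ s := theta_int_nonneg hθnn hu0 hu1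
    have b1 : |G v| ≤ gb := hgb v ⟨hv0, by linarith⟩
    have b2 : |∫ ξ in (0:ℝ)..y, F (x - y + ξ) ξ| ≤ fb * y := by
      have := intervalIntegral.norm_integral_le_of_norm_le_const
        (C := fb) (f := fun ξ => F (x - y + ξ) ξ) (a := 0) (b := y) ?_
      · rwa [sub_zero, abs_of_nonneg hy0] at this
      · intro ξ hξ
        rw [Set.uIoc_of_le hy0] at hξ
        exact hfb (x - y + ξ, ξ) (mem_T hξ.1.le (by linarith [hξ.1.le, hv0]) (by linarith [hξ.2]))
    have b3 : |∫ ξ in (0:ℝ)..v, G ξ * K v ξ| ≤ gb * ∫ s in (0:ℝ)..u, θ s := by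
      refine conv_bound hθm hθnn hv0 hvu hu1 ?_ hgb0 ?_
      · exact (hGc.mul (hKc.comp (continuous_const.prodMk continuous_id))).continuousOn
      · intro ξ hξ
        rw [abs_mul]
        have h1 : |G ξ| ≤ gb := hgb ξ ⟨hξ.1, by linarith [hξ.2]⟩
        have h2 : |K v ξ| ≤ θ (v - ξ) := le_sliceSup hΦc
          (p := (v, ξ)) (mem_T hξ.1 hξ.2 (by linarith)) le_rfl
        exact mul_le_mul h1 h2 (abs_nonneg _) hgb0
    have b4 : |∫ η in (0:ℝ)..y, ∫ ξ in (0:ℝ)..v, F (ξ + η) η * K (v + η) (ξ + η)|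
        ≤ (fb * ∫ s in (0:ℝ)..u, θ s) * y := by
      have := intervalIntegral.norm_integral_le_of_norm_le_const
        (C := fb * ∫ s in (0:ℝ)..u, θ s)
        (f := fun η => ∫ ξ in (0:ℝ)..v, F (ξ + η) η * K (v + η) (ξ + η)) (a := 0) (b := y) ?_
      · rwa [sub_zero, abs_of_nonneg hy0] at this
      · intro η hη
        rw [Set.uIoc_of_le hy0] at hη
        refine conv_bound hθm hθnn hv0 hvu hu1 ?_ hfb0 ?_
        · apply Continuous.continuousOn
          exact (hFc.comp ((continuous_id.add continuous_const).prodMk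
            continuous_const)).mul (hKc.comp (continuous_const.prodMk
            (continuous_id.add continuous_const)))
        · intro ξ hξ
          rw [abs_mul]
          have h1 : |F (ξ + η) η| ≤ fb := hfb (ξ + η, η)
            (mem_T hη.1.le (by linarith [hξ.1]) (by linarith [hξ.2, hη.2]))
          have h2 : |K (v + η) (ξ + η)| ≤ θ (v - ξ) := by
            have := le_sliceSup hΦc (p := (v + η, ξ + η))
              (mem_T (by linarith [hξ.1, hη.1.le]) (by linarith [hξ.2]) (by linarith [hη.2]))
              (show (v + η) - (ξ + η) ≤ v - ξ from le_of_eq (by ring))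
            simpa using this
          exact mul_le_mul h1 h2 (abs_nonneg _) hfb0
    show |K x y| ≤ (gb + fb) + (gb + fb) * ∫ s in (0:ℝ)..u, θ s
    rw [heq x y hy0 hyx hx1]
    have tri : ∀ a b c d : ℝ, |(-a - b + c + d)| ≤ |a| + |b| + |c| + |d| := fun a b c d => by
      calc |(-a - b + c + d)| ≤ |(-a - b + c)| + |d| := abs_add_le _ _
        _ ≤ (|(-a - b)| + |c|) + |d| := by gcongr; exact abs_add_le _ _
        _ ≤ ((|a| + |b|) + |c|) + |d| := by
            gcongr
            calc |(-a - b)| = |(-a) + (-b)| := by rw [show -a - b = (-a) + (-b) by ring]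
              _ ≤ |(-a)| + |(-b)| := abs_add_le _ _
              _ = |a| + |b| := by rw [abs_neg, abs_neg]
        _ = |a| + |b| + |c| + |d| := by ring
    calc |(-G (x-y) - (∫ ξ in (0:ℝ)..y, F (x-y+ξ) ξ)
        + (∫ ξ in (0:ℝ)..(x-y), G ξ * K (x-y) ξ)
        + ∫ η in (0:ℝ)..y, ∫ ξ in (0:ℝ)..(x-y), F (ξ+η) η * K (x-y+η) (ξ+η))|
        ≤ |G (x-y)| + |∫ ξ in (0:ℝ)..y, F (x-y+ξ) ξ|
          + |∫ ξ in (0:ℝ)..(x-y), G ξ * K (x-y) ξ|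
          + |∫ η in (0:ℝ)..y, ∫ ξ in (0:ℝ)..(x-y), F (ξ+η) η * K (x-y+η) (ξ+η)| :=
          tri _ _ _ _
      _ ≤ (gb + fb) + (gb + fb) * ∫ s in (0:ℝ)..u, θ s := by
          have hy' : fb * y ≤ fb * 1 := by nlinarith
          have hy'' : (fb * ∫ s in (0:ℝ)..u, θ s) * y ≤ (fb * ∫ s in (0:ℝ)..u, θ s) * 1 := by
            have : 0 ≤ fb * ∫ s in (0:ℝ)..u, θ s := by positivity
            nlinarith
          nlinarith [b1, b2, b3, b4]
  have hθbound := my_gronwall (by positivity : (0:ℝ) ≤ gb + fb) (by positivity) hθm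
    (hθnn 1 ⟨zero_le_one, le_rfl⟩) hrec
  rintro ⟨x, y⟩ ⟨hy0, hyx, hx1⟩
  have hy0 : (0:ℝ) ≤ y := hy0
  have hyx : y ≤ x := hyx
  have hx1 : x ≤ 1 := hx1
  have h1 : Φ (x, y) ≤ θ (x - y) := le_sliceSup hΦc (mem_T hy0 hyx hx1) le_rfl
  have h2 : θ (x - y) ≤ (gb + fb) * Real.exp (gb + fb) :=
    hθbound (x - y) ⟨by linarith, by linarith⟩
  show |K x y| ≤ kbar gb fb
  rw [kbar]
  exact le_trans h1 h2
lemma ftc_icc {φ φ' : ℝ → ℝ} {lo hi a b : ℝ} (hlo : lo ≤ a) (hab : a ≤ b) (hhi : b ≤ hi)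
    (hcont : ContinuousOn φ (Set.Icc a b)) (h'c : ContinuousOn φ' (Set.Icc a b))
    (hd : ∀ x ∈ Set.Icc lo hi, HasDerivWithinAt φ (φ' x) (Set.Icc lo hi) x) :
    ∫ s in a..b, φ' s = φ b - φ a := by
  apply intervalIntegral.integral_eq_sub_of_hasDeriv_right_of_le hab hcont ?_
    ((by rw [Set.uIcc_of_le hab]; exact h'c : ContinuousOn φ' (Set.uIcc a b)).intervalIntegrable)
  intro x hx
  have hmem : x ∈ Set.Icc lo hi := ⟨(hlo.trans hx.1.le), (hx.2.le.trans hhi)⟩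
  have hD : HasDerivAt φ (φ' x) x := (hd x hmem).hasDerivAt
    (Icc_mem_nhds (hlo.trans_lt hx.1) (hx.2.trans_le hhi))
  exact hD.hasDerivWithinAt

lemma cont_param_fixed (W : ℝ → ℝ → ℝ) (hW : Continuous fun q : ℝ × ℝ => W q.1 q.2) (c : ℝ) :
    Continuous fun x => ∫ t in (0:ℝ)..c, W x t := by
  have h := (cont_param_primitive W hW).comp
    (continuous_id.prodMk continuous_const : Continuous fun x : ℝ => (x, c))
  simpa [Function.comp_def] using h

lemma cont_param_diag (W : ℝ → ℝ → ℝ) (hW : Continuous fun q : ℝ × ℝ => W q.1 q.2) :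
    Continuous fun x => ∫ t in (0:ℝ)..x, W x t := by
  have h := (cont_param_primitive W hW).comp
    (continuous_id.prodMk continuous_id : Continuous fun x : ℝ => (x, x))
  simpa [Function.comp_def] using h

lemma cont_param_prim2 (W : ℝ → ℝ → ℝ) (hW : Continuous fun q : ℝ × ℝ => W q.1 q.2) (c : ℝ) :
    Continuous fun x => ∫ t in x..c, W x t := by
  have key : ∀ x, (∫ t in x..c, W x t) = (∫ t in (0:ℝ)..c, W x t) - ∫ t in (0:ℝ)..x, W x t := by
    intro x
    have h1 : IntervalIntegrable (W x) volume 0 x :=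
      ((hW.comp (Continuous.prodMk_right x))).intervalIntegrable _ _
    have h2 : IntervalIntegrable (W x) volume x c :=
      ((hW.comp (Continuous.prodMk_right x))).intervalIntegrable _ _
    rw [← intervalIntegral.integral_add_adjacent_intervals h1 h2]
    ring
  exact (Continuous.sub (cont_param_fixed W hW c) (cont_param_diag W hW)).congr
    (fun x => (key x).symm)

noncomputable def Psi (G G' : ℝ → ℝ) (F FX K KX : ℝ → ℝ → ℝ) (s y : ℝ) : ℝ :=
  -G' s - (∫ ξ in (0:ℝ)..y, FX (s + ξ) ξ) + G s * K s s
    + (∫ ξ in (0:ℝ)..s, G ξ * KX s ξ)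
    + (∫ η in (0:ℝ)..y, F (s + η) η * K (s + η) (s + η))
    + ∫ η in (0:ℝ)..y, ∫ ξ in (0:ℝ)..s, F (ξ + η) η * KX (s + η) (ξ + η)
lemma key_identity (G G' : ℝ → ℝ) (F FX K KX : ℝ → ℝ → ℝ)
    (hGc : Continuous G) (hG'c : Continuous G')
    (hFc : Continuous fun p : ℝ × ℝ => F p.1 p.2)
    (hFXc : Continuous fun p : ℝ × ℝ => FX p.1 p.2)
    (hKc : Continuous fun p : ℝ × ℝ => K p.1 p.2)
    (hKXc : Continuous fun p : ℝ × ℝ => KX p.1 p.2)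
    (hG' : ∀ t ∈ Set.Icc (0:ℝ) 1, HasDerivWithinAt G (G' t) (Set.Icc 0 1) t)
    (hFX : ∀ x y : ℝ, 0 ≤ y → y ≤ x → x ≤ 1 →
      HasDerivWithinAt (fun ξ => F ξ y) (FX x y) (Set.Icc y 1) x)
    (hKX : ∀ x y : ℝ, 0 ≤ y → y ≤ x → x ≤ 1 →
      HasDerivWithinAt (fun ξ => K ξ y) (KX x y) (Set.Icc y 1) x)
    (heq : ∀ x y : ℝ, 0 ≤ y → y ≤ x → x ≤ 1 →
      K x y = -G (x - y) - (∫ ξ in (0:ℝ)..y, F (x - y + ξ) ξ)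
        + (∫ ξ in (0:ℝ)..(x - y), G ξ * K (x - y) ξ)
        + ∫ η in (0:ℝ)..y, ∫ ξ in (0:ℝ)..(x - y), F (ξ + η) η * K (x - y + η) (ξ + η))
    {y v : ℝ} (hy0 : 0 ≤ y) (hv0 : 0 ≤ v) (hyv : y + v ≤ 1) :
    K (y + v) y = K y y + ∫ s in (0:ℝ)..v, Psi G G' F FX K KX s y := by
  have hy1 : y ≤ 1 := by linarith
  have cF2 : Continuous fun q : ℝ × ℝ => F (q.2 + q.1) q.1 :=
    hFc.comp ((continuous_snd.add continuous_fst).prodMk continuous_fst)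
  have cFX2 : Continuous fun q : ℝ × ℝ => FX (q.2 + q.1) q.1 :=
    hFXc.comp ((continuous_snd.add continuous_fst).prodMk continuous_fst)
  have cGKX : Continuous fun q : ℝ × ℝ => G q.2 * KX q.1 q.2 :=
    (hGc.comp continuous_snd).mul hKXc
  have cGKX' : Continuous fun q : ℝ × ℝ => G q.1 * KX q.2 q.1 :=
    (hGc.comp continuous_fst).mul (hKXc.comp (continuous_snd.prodMk continuous_fst))
  have cFdiag : Continuous fun ξ : ℝ => F ξ ξ :=
    hFc.comp (continuous_id.prodMk continuous_id)
  have cGK : Continuous fun s : ℝ => G s * K s s :=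
    hGc.mul (hKc.comp (continuous_id.prodMk continuous_id))
  have hv1 : v ≤ 1 := by linarith
  -- the two instances of the integral equation
  have E0 : K (y + v) y = -G v - (∫ ξ in (0:ℝ)..y, F (v + ξ) ξ)
      + (∫ ξ in (0:ℝ)..v, G ξ * K v ξ)
      + ∫ η in (0:ℝ)..y, ∫ ξ in (0:ℝ)..v, F (ξ + η) η * K (v + η) (ξ + η) := by
    have := heq (y + v) y hy0 (by linarith) hyv
    rwa [show y + v - y = v by ring] at this
  have E1 : K y y = -G 0 - ∫ ξ in (0:ℝ)..y, F ξ ξ := by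
    have := heq y y hy0 le_rfl hy1
    rw [sub_self] at this
    simpa using this
  -- (a) FTC for G
  have hA : G v = G 0 + ∫ s in (0:ℝ)..v, G' s := by
    have := ftc_icc (lo := 0) (hi := 1) (le_refl 0) hv0 hv1
      hGc.continuousOn hG'c.continuousOn hG'
    linarith
  -- (b)
  have hB : (∫ ξ in (0:ℝ)..y, F (v + ξ) ξ)
      = (∫ ξ in (0:ℝ)..y, F ξ ξ)
        + ∫ s in (0:ℝ)..v, ∫ ξ in (0:ℝ)..y, FX (s + ξ) ξ := by
    have hper : ∀ ξ ∈ Set.uIcc (0:ℝ) y,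
        F (v + ξ) ξ = F ξ ξ + ∫ s in (0:ℝ)..v, FX (s + ξ) ξ := by
      intro ξ hξ
      rw [Set.uIcc_of_le hy0] at hξ
      have hftc : ∫ ζ in ξ..(ξ + v), FX ζ ξ = F (ξ + v) ξ - F ξ ξ :=
        ftc_icc (lo := ξ) (hi := 1) le_rfl (by linarith) (by linarith [hξ.2])
          (hFc.comp (continuous_id.prodMk continuous_const)).continuousOn
          (hFXc.comp (continuous_id.prodMk continuous_const)).continuousOn
          (fun x hx => hFX x ξ hξ.1 hx.1 hx.2)
      have hcmp : (∫ s in (0:ℝ)..v, FX (s + ξ) ξ) = ∫ ζ in ξ..(ξ + v), FX ζ ξ := by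
        rw [intervalIntegral.integral_comp_add_right (fun ζ => FX ζ ξ) ξ]
        norm_num [add_comm]
      rw [hcmp, hftc, show ξ + v = v + ξ by ring]
      ring
    rw [intervalIntegral.integral_congr hper,
      intervalIntegral.integral_add
        (cFdiag.intervalIntegrable _ _)
        ((cont_param_fixed (fun ξ s => FX (s + ξ) ξ) cFX2 v).intervalIntegrable _ _)]
    congr 1
    exact rect_swap (fun ξ s => FX (s + ξ) ξ) hy0 hv0 cFX2
  -- (c)
  have hC : (∫ ξ in (0:ℝ)..v, G ξ * K v ξ)
      = (∫ s in (0:ℝ)..v, G s * K s s)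
        + ∫ s in (0:ℝ)..v, ∫ ξ in (0:ℝ)..s, G ξ * KX s ξ := by
    have hper : ∀ ξ ∈ Set.uIcc (0:ℝ) v,
        G ξ * K v ξ = G ξ * K ξ ξ + ∫ s in ξ..v, G ξ * KX s ξ := by
      intro ξ hξ
      rw [Set.uIcc_of_le hv0] at hξ
      have hftc : ∫ ζ in ξ..v, KX ζ ξ = K v ξ - K ξ ξ :=
        ftc_icc (lo := ξ) (hi := 1) le_rfl hξ.2 hv1
          (hKc.comp (continuous_id.prodMk continuous_const)).continuousOn
          (hKXc.comp (continuous_id.prodMk continuous_const)).continuousOn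
          (fun x hx => hKX x ξ hξ.1 hx.1 hx.2)
      rw [intervalIntegral.integral_const_mul, hftc]
      ring
    rw [intervalIntegral.integral_congr hper,
      intervalIntegral.integral_add
        (cGK.intervalIntegrable _ _)
        ((cont_param_prim2 (fun ξ s => G ξ * KX s ξ) cGKX' v).intervalIntegrable _ _)]
    congr 1
    exact tri_swap (fun s ξ => G ξ * KX s ξ) hv0 cGKX
  -- more continuity facts
  have cW : Continuous fun p : (ℝ × ℝ) × ℝ =>
      F (p.2 + p.1.1) p.1.1 * KX (p.1.2 + p.1.1) (p.2 + p.1.1) :=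
    (hFc.comp ((continuous_snd.add ((continuous_fst.comp continuous_fst))).prodMk
      (continuous_fst.comp continuous_fst))).mul
    (hKXc.comp (((continuous_snd.comp continuous_fst).add
      (continuous_fst.comp continuous_fst)).prodMk
      (continuous_snd.add (continuous_fst.comp continuous_fst))))
  have hRc : Continuous fun q : ℝ × ℝ =>
      ∫ ξ in (0:ℝ)..q.2, F (ξ + q.1) q.1 * KX (q.2 + q.1) (ξ + q.1) := by
    have h := (cont_param_primitive (X := ℝ × ℝ)
      (fun q ξ => F (ξ + q.1) q.1 * KX (q.2 + q.1) (ξ + q.1)) cW).comp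
      ((continuous_id.prodMk continuous_snd) : Continuous fun q : ℝ × ℝ => (q, q.2))
    simpa [Function.comp_def] using h
  have cFK2 : Continuous fun q : ℝ × ℝ => F (q.2 + q.1) q.1 * K (q.2 + q.1) (q.2 + q.1) :=
    cF2.mul (hKc.comp ((continuous_snd.add continuous_fst).prodMk
      (continuous_snd.add continuous_fst)))
  have hD : (∫ η in (0:ℝ)..y, ∫ ξ in (0:ℝ)..v, F (ξ + η) η * K (v + η) (ξ + η))
      = (∫ s in (0:ℝ)..v, ∫ η in (0:ℝ)..y, F (s + η) η * K (s + η) (s + η))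
        + ∫ s in (0:ℝ)..v, ∫ η in (0:ℝ)..y, ∫ ξ in (0:ℝ)..s,
            F (ξ + η) η * KX (s + η) (ξ + η) := by
    have hper : ∀ η ∈ Set.uIcc (0:ℝ) y,
        (∫ ξ in (0:ℝ)..v, F (ξ + η) η * K (v + η) (ξ + η))
          = (∫ ξ in (0:ℝ)..v, F (ξ + η) η * K (ξ + η) (ξ + η))
            + ∫ s in (0:ℝ)..v, ∫ ξ in (0:ℝ)..s, F (ξ + η) η * KX (s + η) (ξ + η) := by
      intro η hη
      rw [Set.uIcc_of_le hy0] at hη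
      have hper2 : ∀ ξ ∈ Set.uIcc (0:ℝ) v,
          F (ξ + η) η * K (v + η) (ξ + η)
            = F (ξ + η) η * K (ξ + η) (ξ + η)
              + ∫ s in ξ..v, F (ξ + η) η * KX (s + η) (ξ + η) := by
        intro ξ hξ
        rw [Set.uIcc_of_le hv0] at hξ
        have hftc : ∫ ζ in (ξ + η)..(v + η), KX ζ (ξ + η)
            = K (v + η) (ξ + η) - K (ξ + η) (ξ + η) :=
          ftc_icc (lo := ξ + η) (hi := 1) le_rfl (by linarith [hξ.2]) (by linarith [hη.2])
            (hKc.comp (continuous_id.prodMk continuous_const)).continuousOn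
            (hKXc.comp (continuous_id.prodMk continuous_const)).continuousOn
            (fun x hx => hKX x (ξ + η) (by linarith [hξ.1, hη.1]) hx.1 hx.2)
        have hcmp : (∫ s in ξ..v, KX (s + η) (ξ + η))
            = ∫ ζ in (ξ + η)..(v + η), KX ζ (ξ + η) :=
          intervalIntegral.integral_comp_add_right (fun ζ => KX ζ (ξ + η)) η
        rw [intervalIntegral.integral_const_mul, hcmp, hftc]
        ring
      have cint1 : Continuous fun ξ : ℝ => F (ξ + η) η * K (ξ + η) (ξ + η) :=
        ((hFc.comp ((continuous_id.add continuous_const).prodMk continuous_const)).mul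
          (hKc.comp ((continuous_id.add continuous_const).prodMk
            (continuous_id.add continuous_const))))
      have cint2 : Continuous fun ξ : ℝ => ∫ s in ξ..v, F (ξ + η) η * KX (s + η) (ξ + η) :=
        cont_param_prim2 (fun ξ s => F (ξ + η) η * KX (s + η) (ξ + η))
          ((hFc.comp ((continuous_fst.add continuous_const).prodMk continuous_const)).mul
            (hKXc.comp ((continuous_snd.add continuous_const).prodMk
              (continuous_fst.add continuous_const)))) v
      rw [intervalIntegral.integral_congr hper2,
        intervalIntegral.integral_add (cint1.intervalIntegrable _ _)
          (cint2.intervalIntegrable _ _)]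
      congr 1
      exact tri_swap (fun s ξ => F (ξ + η) η * KX (s + η) (ξ + η)) hv0
        ((hFc.comp ((continuous_snd.add continuous_const).prodMk continuous_const)).mul
          (hKXc.comp ((continuous_fst.add continuous_const).prodMk
            (continuous_snd.add continuous_const))))
    have cP : Continuous fun η : ℝ => ∫ ξ in (0:ℝ)..v, F (ξ + η) η * K (ξ + η) (ξ + η) :=
      cont_param_fixed (fun η ξ => F (ξ + η) η * K (ξ + η) (ξ + η)) cFK2 v
    have cQ : Continuous fun η : ℝ => ∫ s in (0:ℝ)..v, ∫ ξ in (0:ℝ)..s,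
        F (ξ + η) η * KX (s + η) (ξ + η) :=
      cont_param_fixed (fun η s => ∫ ξ in (0:ℝ)..s, F (ξ + η) η * KX (s + η) (ξ + η)) hRc v
    rw [intervalIntegral.integral_congr hper,
      intervalIntegral.integral_add (cP.intervalIntegrable _ _) (cQ.intervalIntegrable _ _)]
    congr 1
    · exact rect_swap (fun η ξ => F (ξ + η) η * K (ξ + η) (ξ + η)) hy0 hv0 cFK2
    · exact rect_swap (fun η s => ∫ ξ in (0:ℝ)..s, F (ξ + η) η * KX (s + η) (ξ + η))
        hy0 hv0 hRc
  -- splitting the Psi integral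
  have c2 : Continuous fun s : ℝ => ∫ ξ in (0:ℝ)..y, FX (s + ξ) ξ :=
    cont_param_fixed (fun s ξ => FX (s + ξ) ξ) (hFXc.comp
      ((continuous_fst.add continuous_snd).prodMk continuous_snd)) y
  have c4 : Continuous fun s : ℝ => ∫ ξ in (0:ℝ)..s, G ξ * KX s ξ :=
    cont_param_diag (fun s ξ => G ξ * KX s ξ) cGKX
  have c5 : Continuous fun s : ℝ => ∫ η in (0:ℝ)..y, F (s + η) η * K (s + η) (s + η) :=
    cont_param_fixed (fun s η => F (s + η) η * K (s + η) (s + η))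
      ((hFc.comp ((continuous_fst.add continuous_snd).prodMk continuous_snd)).mul
        (hKc.comp ((continuous_fst.add continuous_snd).prodMk
          (continuous_fst.add continuous_snd)))) y
  have hR'c : Continuous fun q : ℝ × ℝ =>
      ∫ ξ in (0:ℝ)..q.1, F (ξ + q.2) q.2 * KX (q.1 + q.2) (ξ + q.2) := by
    have h := hRc.comp ((continuous_snd.prodMk continuous_fst) :
      Continuous fun q : ℝ × ℝ => (q.2, q.1))
    simpa [Function.comp_def] using h
  have c6 : Continuous fun s : ℝ => ∫ η in (0:ℝ)..y, ∫ ξ in (0:ℝ)..s,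
      F (ξ + η) η * KX (s + η) (ξ + η) :=
    cont_param_fixed (fun s η => ∫ ξ in (0:ℝ)..s, F (ξ + η) η * KX (s + η) (ξ + η)) hR'c y
  have hsplit : (∫ s in (0:ℝ)..v, Psi G G' F FX K KX s y)
      = -(∫ s in (0:ℝ)..v, G' s) - (∫ s in (0:ℝ)..v, ∫ ξ in (0:ℝ)..y, FX (s + ξ) ξ)
        + (∫ s in (0:ℝ)..v, G s * K s s)
        + (∫ s in (0:ℝ)..v, ∫ ξ in (0:ℝ)..s, G ξ * KX s ξ)
        + (∫ s in (0:ℝ)..v, ∫ η in (0:ℝ)..y, F (s + η) η * K (s + η) (s + η))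
        + ∫ s in (0:ℝ)..v, ∫ η in (0:ℝ)..y, ∫ ξ in (0:ℝ)..s,
            F (ξ + η) η * KX (s + η) (ξ + η) := by
    simp only [Psi]
    erw [intervalIntegral.integral_add
        (((((hG'c.neg.sub c2).add cGK).add c4).add c5).intervalIntegrable _ _)
        (c6.intervalIntegrable _ _),
      intervalIntegral.integral_add
        ((((hG'c.neg.sub c2).add cGK).add c4).intervalIntegrable _ _)
        (c5.intervalIntegrable _ _),
      intervalIntegral.integral_add
        (((hG'c.neg.sub c2).add cGK).intervalIntegrable _ _)
        (c4.intervalIntegrable _ _),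
      intervalIntegral.integral_add
        ((hG'c.neg.sub c2).intervalIntegrable _ _)
        (cGK.intervalIntegrable _ _),
      intervalIntegral.integral_sub (hG'c.neg.intervalIntegrable _ _)
        (c2.intervalIntegrable _ _),
      intervalIntegral.integral_neg]
  rw [E0, E1, hsplit, hA, hB, hC, hD]
  ring
lemma Psi_cont (G G' : ℝ → ℝ) (F FX K KX : ℝ → ℝ → ℝ)
    (hGc : Continuous G) (hG'c : Continuous G')
    (hFc : Continuous fun p : ℝ × ℝ => F p.1 p.2)
    (hFXc : Continuous fun p : ℝ × ℝ => FX p.1 p.2)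
    (hKc : Continuous fun p : ℝ × ℝ => K p.1 p.2)
    (hKXc : Continuous fun p : ℝ × ℝ => KX p.1 p.2) (y : ℝ) :
    Continuous fun s => Psi G G' F FX K KX s y := by
  have cGKX : Continuous fun q : ℝ × ℝ => G q.2 * KX q.1 q.2 :=
    (hGc.comp continuous_snd).mul hKXc
  have cW : Continuous fun p : (ℝ × ℝ) × ℝ =>
      F (p.2 + p.1.1) p.1.1 * KX (p.1.2 + p.1.1) (p.2 + p.1.1) :=
    (hFc.comp ((continuous_snd.add ((continuous_fst.comp continuous_fst))).prodMk
      (continuous_fst.comp continuous_fst))).mul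
    (hKXc.comp (((continuous_snd.comp continuous_fst).add
      (continuous_fst.comp continuous_fst)).prodMk
      (continuous_snd.add (continuous_fst.comp continuous_fst))))
  have hRc : Continuous fun q : ℝ × ℝ =>
      ∫ ξ in (0:ℝ)..q.2, F (ξ + q.1) q.1 * KX (q.2 + q.1) (ξ + q.1) := by
    have h := (cont_param_primitive (X := ℝ × ℝ)
      (fun q ξ => F (ξ + q.1) q.1 * KX (q.2 + q.1) (ξ + q.1)) cW).comp
      ((continuous_id.prodMk continuous_snd) : Continuous fun q : ℝ × ℝ => (q, q.2))
    simpa [Function.comp_def] using h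
  have hR'c : Continuous fun q : ℝ × ℝ =>
      ∫ ξ in (0:ℝ)..q.1, F (ξ + q.2) q.2 * KX (q.1 + q.2) (ξ + q.2) := by
    have h := hRc.comp ((continuous_snd.prodMk continuous_fst) :
      Continuous fun q : ℝ × ℝ => (q.2, q.1))
    simpa [Function.comp_def] using h
  have c2 : Continuous fun s : ℝ => ∫ ξ in (0:ℝ)..y, FX (s + ξ) ξ :=
    cont_param_fixed (fun s ξ => FX (s + ξ) ξ) (hFXc.comp
      ((continuous_fst.add continuous_snd).prodMk continuous_snd)) y
  have cGK : Continuous fun s : ℝ => G s * K s s :=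
    hGc.mul (hKc.comp (continuous_id.prodMk continuous_id))
  have c4 : Continuous fun s : ℝ => ∫ ξ in (0:ℝ)..s, G ξ * KX s ξ :=
    cont_param_diag (fun s ξ => G ξ * KX s ξ) cGKX
  have c5 : Continuous fun s : ℝ => ∫ η in (0:ℝ)..y, F (s + η) η * K (s + η) (s + η) :=
    cont_param_fixed (fun s η => F (s + η) η * K (s + η) (s + η))
      ((hFc.comp ((continuous_fst.add continuous_snd).prodMk continuous_snd)).mul
        (hKc.comp ((continuous_fst.add continuous_snd).prodMk
          (continuous_fst.add continuous_snd)))) y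
  have c6 : Continuous fun s : ℝ => ∫ η in (0:ℝ)..y, ∫ ξ in (0:ℝ)..s,
      F (ξ + η) η * KX (s + η) (ξ + η) :=
    cont_param_fixed (fun s η => ∫ ξ in (0:ℝ)..s, F (ξ + η) η * KX (s + η) (ξ + η)) hR'c y
  exact ((((hG'c.neg.sub c2).add cGK).add c4).add c5).add c6

lemma deriv_identity (G G' : ℝ → ℝ) (F FX K KX : ℝ → ℝ → ℝ)
    (hGc : Continuous G) (hG'c : Continuous G')
    (hFc : Continuous fun p : ℝ × ℝ => F p.1 p.2)
    (hFXc : Continuous fun p : ℝ × ℝ => FX p.1 p.2)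
    (hKc : Continuous fun p : ℝ × ℝ => K p.1 p.2)
    (hKXc : Continuous fun p : ℝ × ℝ => KX p.1 p.2)
    (hG' : ∀ t ∈ Set.Icc (0:ℝ) 1, HasDerivWithinAt G (G' t) (Set.Icc 0 1) t)
    (hFX : ∀ x y : ℝ, 0 ≤ y → y ≤ x → x ≤ 1 →
      HasDerivWithinAt (fun ξ => F ξ y) (FX x y) (Set.Icc y 1) x)
    (hKX : ∀ x y : ℝ, 0 ≤ y → y ≤ x → x ≤ 1 →
      HasDerivWithinAt (fun ξ => K ξ y) (KX x y) (Set.Icc y 1) x)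
    (heq : ∀ x y : ℝ, 0 ≤ y → y ≤ x → x ≤ 1 →
      K x y = -G (x - y) - (∫ ξ in (0:ℝ)..y, F (x - y + ξ) ξ)
        + (∫ ξ in (0:ℝ)..(x - y), G ξ * K (x - y) ξ)
        + ∫ η in (0:ℝ)..y, ∫ ξ in (0:ℝ)..(x - y), F (ξ + η) η * K (x - y + η) (ξ + η)) :
    ∀ x y : ℝ, 0 ≤ y → y ≤ x → x ≤ 1 → y < 1 →
      KX x y = Psi G G' F FX K KX (x - y) y := by
  intro x y hy0 hyx hx1 hy1
  have hΨc : Continuous fun s => Psi G G' F FX K KX s y :=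
    Psi_cont G G' F FX K KX hGc hG'c hFc hFXc hKc hKXc y
  have hprim : HasDerivAt (fun u => ∫ s in (0:ℝ)..u, Psi G G' F FX K KX s y)
      (Psi G G' F FX K KX (x - y) y) (x - y) :=
    intervalIntegral.integral_hasDerivAt_right (hΨc.intervalIntegrable _ _)
      (hΨc.stronglyMeasurable.stronglyMeasurableAtFilter) hΨc.continuousAt
  have hcomp : HasDerivAt (fun ζ => K y y + ∫ s in (0:ℝ)..(ζ - y), Psi G G' F FX K KX s y)
      (Psi G G' F FX K KX (x - y) y) x := by
    have h2 : HasDerivAt (fun ζ : ℝ => ζ - y) 1 x := (hasDerivAt_id x).sub_const y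
    have h3 := HasDerivAt.comp x hprim h2
    simpa using h3.const_add (K y y)
  have heqOn : Set.EqOn (fun ζ => K ζ y)
      (fun ζ => K y y + ∫ s in (0:ℝ)..(ζ - y), Psi G G' F FX K KX s y) (Set.Icc y 1) := by
    intro ζ hζ
    have := key_identity G G' F FX K KX hGc hG'c hFc hFXc hKc hKXc hG' hFX hKX heq
      (y := y) (v := ζ - y) hy0 (by linarith [hζ.1]) (by linarith [hζ.2])
    simpa [show y + (ζ - y) = ζ by ring] using this
  have hd1 : HasDerivWithinAt (fun ζ => K ζ y) (Psi G G' F FX K KX (x - y) y)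
      (Set.Icc y 1) x :=
    (hcomp.hasDerivWithinAt).congr heqOn (heqOn ⟨hyx, hx1⟩)
  have hd2 : HasDerivWithinAt (fun ζ => K ζ y) (KX x y) (Set.Icc y 1) x :=
    hKX x y hy0 hyx hx1
  have huniq : UniqueDiffWithinAt ℝ (Set.Icc y 1) x := uniqueDiffOn_Icc hy1 x ⟨hyx, hx1⟩
  have e1 := hd1.derivWithin huniq
  have e2 := hd2.derivWithin huniq
  rw [← e1, ← e2]
lemma KX_bound (G G' : ℝ → ℝ) (F FX K KX : ℝ → ℝ → ℝ)
    (hGc : Continuous G) (hG'c : Continuous G')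
    (hFc : Continuous fun p : ℝ × ℝ => F p.1 p.2)
    (hFXc : Continuous fun p : ℝ × ℝ => FX p.1 p.2)
    (hKc : Continuous fun p : ℝ × ℝ => K p.1 p.2)
    (hKXc : Continuous fun p : ℝ × ℝ => KX p.1 p.2)
    (hG' : ∀ t ∈ Set.Icc (0:ℝ) 1, HasDerivWithinAt G (G' t) (Set.Icc 0 1) t)
    (hFX : ∀ x y : ℝ, 0 ≤ y → y ≤ x → x ≤ 1 →
      HasDerivWithinAt (fun ξ => F ξ y) (FX x y) (Set.Icc y 1) x)
    (hKX : ∀ x y : ℝ, 0 ≤ y → y ≤ x → x ≤ 1 →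
      HasDerivWithinAt (fun ξ => K ξ y) (KX x y) (Set.Icc y 1) x)
    (heq : ∀ x y : ℝ, 0 ≤ y → y ≤ x → x ≤ 1 →
      K x y = -G (x - y) - (∫ ξ in (0:ℝ)..y, F (x - y + ξ) ξ)
        + (∫ ξ in (0:ℝ)..(x - y), G ξ * K (x - y) ξ)
        + ∫ η in (0:ℝ)..y, ∫ ξ in (0:ℝ)..(x - y), F (ξ + η) η * K (x - y + η) (ξ + η))
    {gb gb' fb fxb : ℝ}
    (hgb : ∀ t ∈ Set.Icc (0:ℝ) 1, |G t| ≤ gb) (hgb' : ∀ t ∈ Set.Icc (0:ℝ) 1, |G' t| ≤ gb')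
    (hfb : ∀ p ∈ T, |F p.1 p.2| ≤ fb) (hfxb : ∀ p ∈ T, |FX p.1 p.2| ≤ fxb) :
    ∀ p ∈ T, |KX p.1 p.2| ≤ (fxb + phibar gb gb' fb) * Real.exp (gb + fb) := by
  have hgb0 : 0 ≤ gb := (abs_nonneg _).trans (hgb 0 ⟨le_rfl, zero_le_one⟩)
  have hgb'0 : 0 ≤ gb' := (abs_nonneg _).trans (hgb' 0 ⟨le_rfl, zero_le_one⟩)
  have hfb0 : 0 ≤ fb := (abs_nonneg _).trans (hfb (0,0) (mem_T le_rfl le_rfl zero_le_one))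
  have hfxb0 : 0 ≤ fxb := (abs_nonneg _).trans (hfxb (0,0) (mem_T le_rfl le_rfl zero_le_one))
  have hKb : ∀ p ∈ T, |K p.1 p.2| ≤ kbar gb fb := K_bound G F K hGc hFc hKc hgb hfb heq
  set Kb : ℝ := kbar gb fb with hKbdef
  have hKb0 : 0 ≤ Kb := by rw [hKbdef, kbar]; positivity
  set Cc : ℝ := fxb + gb' + (gb + fb) * Kb with hCcdef
  have hCc0 : 0 ≤ Cc := by rw [hCcdef]; positivity
  set Φ : ℝ × ℝ → ℝ := fun p => |KX p.1 p.2| with hΦdef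
  have hΦc : Continuous Φ := hKXc.abs
  have hΦnn : ∀ p, 0 ≤ Φ p := fun p => abs_nonneg _
  set χ : ℝ → ℝ := sliceSup Φ with hχdef
  have hχm : MonotoneOn χ (Set.Icc 0 1) := sliceSup_mono hΦc
  have hχnn : ∀ t ∈ Set.Icc (0:ℝ) 1, 0 ≤ χ t := fun t ht => sliceSup_nonneg hΦc hΦnn ht.1
  have tri6 : ∀ a b c d e f : ℝ,
      |(-a - b + c + d + e + f)| ≤ |a| + |b| + |c| + |d| + |e| + |f| := by
    intro a b c d e f
    calc |(-a - b + c + d + e + f)| ≤ |(-a - b + c + d + e)| + |f| := abs_add_le _ _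
      _ ≤ (|(-a - b + c + d)| + |e|) + |f| := by gcongr; exact abs_add_le _ _
      _ ≤ ((|(-a - b + c)| + |d|) + |e|) + |f| := by gcongr; exact abs_add_le _ _
      _ ≤ (((|(-a - b)| + |c|) + |d|) + |e|) + |f| := by gcongr; exact abs_add_le _ _
      _ ≤ ((((|a| + |b|) + |c|) + |d|) + |e|) + |f| := by
          gcongr
          calc |(-a - b)| = |(-a) + (-b)| := by rw [show -a - b = (-a) + (-b) by ring]
            _ ≤ |(-a)| + |(-b)| := abs_add_le _ _
            _ = |a| + |b| := by rw [abs_neg, abs_neg]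
      _ = |a| + |b| + |c| + |d| + |e| + |f| := by ring
  have hΨbd : ∀ v y u : ℝ, 0 ≤ y → 0 ≤ v → v + y ≤ 1 → v ≤ u → u ≤ 1 →
      |Psi G G' F FX K KX v y| ≤ Cc + (gb + fb) * ∫ s in (0:ℝ)..u, χ s := by
    intro v y u hy0 hv0 hvy hvu hu1
    have hu0 : 0 ≤ u := hv0.trans hvu
    have hy1 : y ≤ 1 := by linarith
    have hv1 : v ≤ 1 := by linarith
    have hIχnn : 0 ≤ ∫ s in (0:ℝ)..u, χ s := theta_int_nonneg hχnn hu0 hu1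
    have p1 : |G' v| ≤ gb' := hgb' v ⟨hv0, hv1⟩
    have p2 : |∫ ξ in (0:ℝ)..y, FX (v + ξ) ξ| ≤ fxb * y := by
      have := intervalIntegral.norm_integral_le_of_norm_le_const (C := fxb)
        (f := fun ξ => FX (v + ξ) ξ) (a := 0) (b := y) ?_
      · rwa [sub_zero, abs_of_nonneg hy0] at this
      · intro ξ hξ
        rw [Set.uIoc_of_le hy0] at hξ
        exact hfxb (v + ξ, ξ) (mem_T hξ.1.le (by linarith [hξ.1.le]) (by linarith [hξ.2]))
    have p3 : |G v * K v v| ≤ gb * Kb := by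
      rw [abs_mul]
      exact mul_le_mul (hgb v ⟨hv0, hv1⟩) (hKb (v, v) (mem_T hv0 le_rfl hv1))
        (abs_nonneg _) hgb0
    have p4 : |∫ ξ in (0:ℝ)..v, G ξ * KX v ξ| ≤ gb * ∫ s in (0:ℝ)..u, χ s := by
      refine conv_bound hχm hχnn hv0 hvu hu1
        ((hGc.mul (hKXc.comp (continuous_const.prodMk continuous_id))).continuousOn)
        hgb0 ?_
      intro ξ hξ
      show |G ξ * KX v ξ| ≤ gb * χ (v - ξ)
      rw [abs_mul]
      exact mul_le_mul (hgb ξ ⟨hξ.1, by linarith [hξ.2]⟩)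
        (le_sliceSup hΦc (p := (v, ξ)) (mem_T hξ.1 hξ.2 hv1) le_rfl)
        (abs_nonneg _) hgb0
    have p5 : |∫ η in (0:ℝ)..y, F (v + η) η * K (v + η) (v + η)| ≤ (fb * Kb) * y := by
      have := intervalIntegral.norm_integral_le_of_norm_le_const (C := fb * Kb)
        (f := fun η => F (v + η) η * K (v + η) (v + η)) (a := 0) (b := y) ?_
      · rwa [sub_zero, abs_of_nonneg hy0] at this
      · intro η hη
        rw [Set.uIoc_of_le hy0] at hη
        rw [Real.norm_eq_abs, abs_mul]
        exact mul_le_mul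
          (hfb (v + η, η) (mem_T hη.1.le (by linarith) (by linarith [hη.2])))
          (hKb (v + η, v + η) (mem_T (by linarith [hη.1.le]) le_rfl (by linarith [hη.2])))
          (abs_nonneg _) hfb0
    have p6 : |∫ η in (0:ℝ)..y, ∫ ξ in (0:ℝ)..v, F (ξ + η) η * KX (v + η) (ξ + η)|
        ≤ (fb * ∫ s in (0:ℝ)..u, χ s) * y := by
      have := intervalIntegral.norm_integral_le_of_norm_le_const
        (C := fb * ∫ s in (0:ℝ)..u, χ s)
        (f := fun η => ∫ ξ in (0:ℝ)..v, F (ξ + η) η * KX (v + η) (ξ + η)) (a := 0) (b := y) ?_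
      · rwa [sub_zero, abs_of_nonneg hy0] at this
      · intro η hη
        rw [Set.uIoc_of_le hy0] at hη
        rw [Real.norm_eq_abs]
        refine conv_bound hχm hχnn hv0 hvu hu1 ?_ hfb0 ?_
        · exact ((hFc.comp ((continuous_id.add continuous_const).prodMk
            continuous_const)).mul (hKXc.comp (continuous_const.prodMk
            (continuous_id.add continuous_const)))).continuousOn
        · intro ξ hξ
          rw [abs_mul]
          have h2 : |KX (v + η) (ξ + η)| ≤ χ (v - ξ) := by
            have := le_sliceSup hΦc (p := (v + η, ξ + η))
              (mem_T (by linarith [hξ.1, hη.1.le]) (by linarith [hξ.2]) (by linarith [hη.2]))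
              (show (v + η) - (ξ + η) ≤ v - ξ from le_of_eq (by ring))
            simpa using this
          exact mul_le_mul
            (hfb (ξ + η, η) (mem_T hη.1.le (by linarith [hξ.1]) (by linarith [hξ.2, hη.2])))
            h2 (abs_nonneg _) hfb0
    calc |Psi G G' F FX K KX v y|
        ≤ |G' v| + |∫ ξ in (0:ℝ)..y, FX (v + ξ) ξ| + |G v * K v v|
          + |∫ ξ in (0:ℝ)..v, G ξ * KX v ξ|
          + |∫ η in (0:ℝ)..y, F (v + η) η * K (v + η) (v + η)|
          + |∫ η in (0:ℝ)..y, ∫ ξ in (0:ℝ)..v, F (ξ + η) η * KX (v + η) (ξ + η)| := by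
          rw [Psi]
          exact tri6 _ _ _ _ _ _
      _ ≤ Cc + (gb + fb) * ∫ s in (0:ℝ)..u, χ s := by
          rw [hCcdef]
          nlinarith [p1, p2, p3, p4, p5, p6, hIχnn,
            mul_le_mul_of_nonneg_left hy1 hfxb0,
            mul_le_mul_of_nonneg_left hy1 (mul_nonneg hfb0 hKb0),
            mul_le_mul_of_nonneg_left hy1 (mul_nonneg hfb0 hIχnn)]
  have hdiag : ∀ t : ℝ, 0 ≤ t → t < 1 → |KX t t| ≤ Cc := by
    intro t ht0 ht1
    rw [deriv_identity G G' F FX K KX hGc hG'c hFc hFXc hKc hKXc hG' hFX hKX heq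
      t t ht0 le_rfl ht1.le ht1, sub_self]
    have := hΨbd 0 t 0 ht0 le_rfl (by linarith) le_rfl zero_le_one
    simpa [intervalIntegral.integral_same] using this
  have hcorner : |KX 1 1| ≤ Cc := by
    have hlim : Filter.Tendsto (fun t : ℝ => |KX t t|) (nhdsWithin 1 (Set.Iio 1))
        (nhds |KX 1 1|) := by
      have hco : Continuous fun t : ℝ => |KX t t| :=
        (hKXc.comp (continuous_id.prodMk continuous_id)).abs
      exact (hco.tendsto 1).mono_left nhdsWithin_le_nhds
    refine le_of_tendsto hlim ?_
    filter_upwards [Ioo_mem_nhdsLT_of_mem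
      (show (1:ℝ) ∈ Set.Ioc 0 1 from ⟨zero_lt_one, le_rfl⟩)] with t ht
    exact hdiag t ht.1.le ht.2
  have hrec : ∀ u ∈ Set.Icc (0:ℝ) 1, χ u ≤ Cc + (gb + fb) * ∫ s in (0:ℝ)..u, χ s := by
    rintro u ⟨hu0, hu1⟩
    have hIχnn : 0 ≤ ∫ s in (0:ℝ)..u, χ s := theta_int_nonneg hχnn hu0 hu1
    apply sliceSup_le hu0
    rintro ⟨x, y⟩ ⟨hy0, hyx, hx1⟩ hdiff
    have hy0 : (0:ℝ) ≤ y := hy0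
    have hyx : y ≤ x := hyx
    have hx1 : x ≤ 1 := hx1
    have hdiff' : x - y ≤ u := hdiff
    show |KX x y| ≤ Cc + (gb + fb) * ∫ s in (0:ℝ)..u, χ s
    by_cases hy1 : y < 1
    · rw [deriv_identity G G' F FX K KX hGc hG'c hFc hFXc hKc hKXc hG' hFX hKX heq
        x y hy0 hyx hx1 hy1]
      exact hΨbd (x - y) y u hy0 (by linarith) (by linarith) hdiff' hu1
    · have hy1' : y = 1 := le_antisymm (hyx.trans hx1) (not_lt.1 hy1)
      have hx1' : x = 1 := le_antisymm hx1 (hy1' ▸ hyx)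
      rw [hx1', hy1']
      nlinarith [hcorner, mul_nonneg (by positivity : (0:ℝ) ≤ gb + fb) hIχnn]
  have hgron := my_gronwall hCc0 (by positivity : (0:ℝ) ≤ gb + fb) hχm
    (hχnn 1 ⟨zero_le_one, le_rfl⟩) hrec
  rintro ⟨x, y⟩ ⟨hy0, hyx, hx1⟩
  have hy0 : (0:ℝ) ≤ y := hy0
  have hyx : y ≤ x := hyx
  have hx1 : x ≤ 1 := hx1
  have h1 : Φ (x, y) ≤ χ (x - y) := le_sliceSup hΦc (mem_T hy0 hyx hx1) le_rfl
  have h2 : χ (x - y) ≤ Cc * Real.exp (gb + fb) := hgron (x - y) ⟨by linarith, by linarith⟩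
  show |KX x y| ≤ (fxb + phibar gb gb' fb) * Real.exp (gb + fb)
  have : (fxb + phibar gb gb' fb) = Cc := by
    rw [phibar, hCcdef, hKbdef]
    ring
  rw [this]
  exact le_trans h1 h2

lemma le_supNorm {g : ℝ → ℝ} (hg : ContinuousOn g (Set.Icc 0 1)) :
    ∀ t ∈ Set.Icc (0:ℝ) 1, |g t| ≤ supNorm g := by
  intro t ht
  apply le_csSup _ (Set.mem_image_of_mem _ ht)
  exact (isCompact_Icc.image_of_continuousOn hg.abs).bddAbove

lemma le_supT {f : ℝ → ℝ → ℝ} (hf : ContinuousOn (fun p : ℝ × ℝ => f p.1 p.2) T) :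
    ∀ p ∈ T, |f p.1 p.2| ≤ supT f := by
  intro p hp
  apply le_csSup _ (Set.mem_image_of_mem _ hp)
  exact (isCompact_T.image_of_continuousOn hf.abs).bddAbove

/-- bound |k_x(x,y)| ≤ (f̄_x + φ̄₀) e^{ḡ + f̄} on the x-derivative of the
solution of the two-dimensional backstepping kernel integral equation. -/
theorem kernel2d_x_derivative_bound (g g' : ℝ → ℝ) (f fx fy k kx ky : ℝ → ℝ → ℝ)
    (hg : ContinuousOn g (Set.Icc 0 1))
    (hg' : ∀ x ∈ Set.Icc (0:ℝ) 1, HasDerivWithinAt g (g' x) (Set.Icc 0 1) x)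
    (hg'c : ContinuousOn g' (Set.Icc 0 1))
    (hf : ContinuousOn (fun p : ℝ × ℝ => f p.1 p.2) T)
    (hfx : ∀ x y : ℝ, 0 ≤ y → y ≤ x → x ≤ 1 →
      HasDerivWithinAt (fun ξ => f ξ y) (fx x y) (Set.Icc y 1) x)
    (hfxc : ContinuousOn (fun p : ℝ × ℝ => fx p.1 p.2) T)
    (hfy : ∀ x y : ℝ, 0 ≤ y → y ≤ x → x ≤ 1 →
      HasDerivWithinAt (fun η => f x η) (fy x y) (Set.Icc 0 x) y)
    (hfyc : ContinuousOn (fun p : ℝ × ℝ => fy p.1 p.2) T)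
    (hk : ContinuousOn (fun p : ℝ × ℝ => k p.1 p.2) T)
    (hkx : ∀ x y : ℝ, 0 ≤ y → y ≤ x → x ≤ 1 →
      HasDerivWithinAt (fun ξ => k ξ y) (kx x y) (Set.Icc y 1) x)
    (hkxc : ContinuousOn (fun p : ℝ × ℝ => kx p.1 p.2) T)
    (hky : ∀ x y : ℝ, 0 ≤ y → y ≤ x → x ≤ 1 →
      HasDerivWithinAt (fun η => k x η) (ky x y) (Set.Icc 0 x) y)
    (hkyc : ContinuousOn (fun p : ℝ × ℝ => ky p.1 p.2) T)
    (heq : ∀ x y : ℝ, 0 ≤ y → y ≤ x → x ≤ 1 →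
      k x y = -g (x - y) - (∫ ξ in (0:ℝ)..y, f (x - y + ξ) ξ)
        + (∫ ξ in (0:ℝ)..(x - y), g ξ * k (x - y) ξ)
        + ∫ η in (0:ℝ)..y, ∫ ξ in (0:ℝ)..(x - y),
            f (ξ + η) η * k (x - y + η) (ξ + η)) :
    ∀ x y : ℝ, 0 ≤ y → y ≤ x → x ≤ 1 →
      |kx x y| ≤ (supT fx + phibar (supNorm g) (supNorm g') (supT f)) *
        Real.exp (supNorm g + supT f) := by
  -- extensions
  obtain ⟨G, hGc, hGeq⟩ := tietze_ext isClosed_Icc g hg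
  obtain ⟨G', hG'c, hG'eq⟩ := tietze_ext isClosed_Icc g' hg'c
  obtain ⟨F0, hF0c, hF0eq⟩ := tietze_ext isClosed_T _ hf
  obtain ⟨FX0, hFX0c, hFX0eq⟩ := tietze_ext isClosed_T _ hfxc
  obtain ⟨K0, hK0c, hK0eq⟩ := tietze_ext isClosed_T _ hk
  obtain ⟨KX0, hKX0c, hKX0eq⟩ := tietze_ext isClosed_T _ hkxc
  set F : ℝ → ℝ → ℝ := fun a b => F0 (a, b) with hFdef
  set FX : ℝ → ℝ → ℝ := fun a b => FX0 (a, b) with hFXdef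
  set K : ℝ → ℝ → ℝ := fun a b => K0 (a, b) with hKdef
  set KX : ℝ → ℝ → ℝ := fun a b => KX0 (a, b) with hKXdef
  have hFc : Continuous fun p : ℝ × ℝ => F p.1 p.2 := by simpa using hF0c
  have hFXc : Continuous fun p : ℝ × ℝ => FX p.1 p.2 := by simpa using hFX0c
  have hKc : Continuous fun p : ℝ × ℝ => K p.1 p.2 := by simpa using hK0c
  have hKXc : Continuous fun p : ℝ × ℝ => KX p.1 p.2 := by simpa using hKX0c
  have hFeq : ∀ a b : ℝ, 0 ≤ b → b ≤ a → a ≤ 1 → F a b = f a b := fun a b h1 h2 h3 =>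
    hF0eq (a, b) (mem_T h1 h2 h3)
  have hFXeq : ∀ a b : ℝ, 0 ≤ b → b ≤ a → a ≤ 1 → FX a b = fx a b := fun a b h1 h2 h3 =>
    hFX0eq (a, b) (mem_T h1 h2 h3)
  have hKeq : ∀ a b : ℝ, 0 ≤ b → b ≤ a → a ≤ 1 → K a b = k a b := fun a b h1 h2 h3 =>
    hK0eq (a, b) (mem_T h1 h2 h3)
  have hKXeq : ∀ a b : ℝ, 0 ≤ b → b ≤ a → a ≤ 1 → KX a b = kx a b := fun a b h1 h2 h3 =>
    hKX0eq (a, b) (mem_T h1 h2 h3)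
  -- transferred derivative hypotheses
  have hG' : ∀ t ∈ Set.Icc (0:ℝ) 1, HasDerivWithinAt G (G' t) (Set.Icc 0 1) t := by
    intro t ht
    rw [hG'eq t ht]
    exact (hg' t ht).congr (fun s hs => hGeq s hs) (hGeq t ht)
  have hFX : ∀ x y : ℝ, 0 ≤ y → y ≤ x → x ≤ 1 →
      HasDerivWithinAt (fun ξ => F ξ y) (FX x y) (Set.Icc y 1) x := by
    intro x y h1 h2 h3
    rw [show FX x y = fx x y from hFXeq x y h1 h2 h3]
    exact (hfx x y h1 h2 h3).congr
      (fun s hs => hFeq s y h1 hs.1 hs.2) (hFeq x y h1 h2 h3)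
  have hKX : ∀ x y : ℝ, 0 ≤ y → y ≤ x → x ≤ 1 →
      HasDerivWithinAt (fun ξ => K ξ y) (KX x y) (Set.Icc y 1) x := by
    intro x y h1 h2 h3
    rw [show KX x y = kx x y from hKXeq x y h1 h2 h3]
    exact (hkx x y h1 h2 h3).congr
      (fun s hs => hKeq s y h1 hs.1 hs.2) (hKeq x y h1 h2 h3)
  -- transferred integral equation
  have heq2 : ∀ x y : ℝ, 0 ≤ y → y ≤ x → x ≤ 1 →
      K x y = -G (x - y) - (∫ ξ in (0:ℝ)..y, F (x - y + ξ) ξ)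
        + (∫ ξ in (0:ℝ)..(x - y), G ξ * K (x - y) ξ)
        + ∫ η in (0:ℝ)..y, ∫ ξ in (0:ℝ)..(x - y),
            F (ξ + η) η * K (x - y + η) (ξ + η) := by
    intro x y h1 h2 h3
    have hv0 : 0 ≤ x - y := by linarith
    have e1 : (∫ ξ in (0:ℝ)..y, F (x - y + ξ) ξ) = ∫ ξ in (0:ℝ)..y, f (x - y + ξ) ξ := by
      apply intervalIntegral.integral_congr
      intro ξ hξ
      rw [Set.uIcc_of_le h1] at hξ
      exact hFeq _ _ hξ.1 (by linarith [hξ.1]) (by linarith [hξ.2])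
    have e2 : (∫ ξ in (0:ℝ)..(x - y), G ξ * K (x - y) ξ)
        = ∫ ξ in (0:ℝ)..(x - y), g ξ * k (x - y) ξ := by
      apply intervalIntegral.integral_congr
      intro ξ hξ
      rw [Set.uIcc_of_le hv0] at hξ
      show G ξ * K (x - y) ξ = g ξ * k (x - y) ξ
      rw [hGeq ξ ⟨hξ.1, by linarith [hξ.2]⟩, hKeq _ _ hξ.1 hξ.2 (by linarith)]
    have e3 : (∫ η in (0:ℝ)..y, ∫ ξ in (0:ℝ)..(x - y), F (ξ + η) η * K (x - y + η) (ξ + η))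
        = ∫ η in (0:ℝ)..y, ∫ ξ in (0:ℝ)..(x - y), f (ξ + η) η * k (x - y + η) (ξ + η) := by
      apply intervalIntegral.integral_congr
      intro η hη
      rw [Set.uIcc_of_le h1] at hη
      apply intervalIntegral.integral_congr
      intro ξ hξ
      rw [Set.uIcc_of_le hv0] at hξ
      show F (ξ + η) η * K (x - y + η) (ξ + η) = f (ξ + η) η * k (x - y + η) (ξ + η)
      rw [hFeq _ _ hη.1 (by linarith [hξ.1]) (by linarith [hξ.2, hη.2]),
        hKeq _ _ (by linarith [hξ.1, hη.1]) (by linarith [hξ.2]) (by linarith [hη.2])]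
    rw [hKeq x y h1 h2 h3, e1, e2, e3, hGeq (x - y) ⟨hv0, by linarith⟩]
    exact heq x y h1 h2 h3
  -- sup bounds
  have hgb : ∀ t ∈ Set.Icc (0:ℝ) 1, |G t| ≤ supNorm g := fun t ht =>
    (hGeq t ht) ▸ le_supNorm hg t ht
  have hgb' : ∀ t ∈ Set.Icc (0:ℝ) 1, |G' t| ≤ supNorm g' := fun t ht =>
    (hG'eq t ht) ▸ le_supNorm hg'c t ht
  have hfb : ∀ p ∈ T, |F p.1 p.2| ≤ supT f := by
    rintro ⟨a, b⟩ hp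
    have := hFeq a b hp.1 hp.2.1 hp.2.2
    rw [show F (a, b).1 (a, b).2 = f a b by exact this]
    exact le_supT hf (a, b) hp
  have hfxb : ∀ p ∈ T, |FX p.1 p.2| ≤ supT fx := by
    rintro ⟨a, b⟩ hp
    rw [show FX (a, b).1 (a, b).2 = fx a b from hFXeq a b hp.1 hp.2.1 hp.2.2]
    exact le_supT hfxc (a, b) hp
  -- main bound
  intro x y h1 h2 h3
  have := KX_bound G G' F FX K KX hGc hG'c hFc hFXc hKc hKXc hG' hFX hKX heq2
    hgb hgb' hfb hfxb (x, y) (mem_T h1 h2 h3)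
  rwa [show KX (x, y).1 (x, y).2 = kx x y from hKXeq x y h1 h2 h3] at this

end
end

section
/- Let T = {(x,y) : 0 ≤ y ≤ x ≤ 1}, let k̂ : T → ℝ be continuous with ‖k̂‖_∞ = sup_T |k̂|, and let l̂ : T → ℝ be a continuous solution of the integral equation l̂(x,y) = k̂(x,y) + ∫_y^x k̂(x,ξ) l̂(ξ,y) dξ for all (x,y) ∈ T. Then sup_T |l̂| ≤ ‖k̂‖_∞ e^{‖k̂‖_∞}. -/
open MeasureTheory

/-- bound sup_T |l̂| ≤ ‖k̂‖_∞ e^{‖k̂‖_∞} on the inverse Volterra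
backstepping kernel, which satisfies l̂(x,y) = k̂(x,y) + ∫_y^x k̂(x,ξ) l̂(ξ,y) dξ. -/
theorem inverse_volterra_kernel_bound (khat lhat : ℝ → ℝ → ℝ)
    (hkhat : ContinuousOn (fun p : ℝ × ℝ => khat p.1 p.2) T)
    (hlhat : ContinuousOn (fun p : ℝ × ℝ => lhat p.1 p.2) T)
    (heq : ∀ x y : ℝ, 0 ≤ y → y ≤ x → x ≤ 1 →
      lhat x y = khat x y + ∫ ξ in y..x, khat x ξ * lhat ξ y) :
    supT lhat ≤ supT khat * Real.exp (supT khat) := by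
  -- T is compact
  have hTsub : T ⊆ Set.Icc (0:ℝ) 1 ×ˢ Set.Icc (0:ℝ) 1 := by
    rintro p ⟨h1, h2, h3⟩
    exact ⟨⟨le_trans h1 h2, h3⟩, ⟨h1, le_trans h2 h3⟩⟩
  have hTclosed : IsClosed T := by
    have h1 : IsClosed {p : ℝ × ℝ | 0 ≤ p.2} := isClosed_le continuous_const continuous_snd
    have h2 : IsClosed {p : ℝ × ℝ | p.2 ≤ p.1} := isClosed_le continuous_snd continuous_fst
    have h3 : IsClosed {p : ℝ × ℝ | p.1 ≤ 1} := isClosed_le continuous_fst continuous_const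
    have : T = {p : ℝ × ℝ | 0 ≤ p.2} ∩ ({p : ℝ × ℝ | p.2 ≤ p.1} ∩ {p : ℝ × ℝ | p.1 ≤ 1}) := by
      ext p; simp [T, Set.mem_inter_iff, and_assoc]
    rw [this]
    exact h1.inter (h2.inter h3)
  have hTcomp : IsCompact T :=
    (isCompact_Icc.prod isCompact_Icc).of_isClosed_subset hTclosed hTsub
  have h00 : ((0:ℝ), (0:ℝ)) ∈ T := ⟨le_refl _, le_refl _, zero_le_one⟩
  have hbddk : BddAbove ((fun p : ℝ × ℝ => |khat p.1 p.2|) '' T) :=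
    hTcomp.bddAbove_image hkhat.abs
  set K := supT khat with hKdef
  have hKb : ∀ a b : ℝ, 0 ≤ b → b ≤ a → a ≤ 1 → |khat a b| ≤ K := by
    intro a b h1 h2 h3
    exact le_csSup hbddk ⟨(a, b), ⟨h1, h2, h3⟩, rfl⟩
  have hK0 : 0 ≤ K := (abs_nonneg _).trans (hKb 0 0 le_rfl le_rfl zero_le_one)
  -- key pointwise bound
  have key : ∀ x y : ℝ, 0 ≤ y → y ≤ x → x ≤ 1 → |lhat x y| ≤ K * Real.exp K := by
    intro x y hy0 hyx hx1
    have hy1 : y ≤ 1 := hyx.trans hx1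
    -- clamp function
    set c : ℝ → ℝ := fun ξ => max y (min ξ 1) with hcdef
    have hcy : ∀ ξ, y ≤ c ξ := fun ξ => le_max_left _ _
    have hc1 : ∀ ξ, c ξ ≤ 1 := fun ξ => max_le hy1 (min_le_right _ _)
    have hceq : ∀ ξ, y ≤ ξ → ξ ≤ 1 → c ξ = ξ := by
      intro ξ h1 h2
      simp only [hcdef]
      rw [min_eq_left h2, max_eq_right h1]
    have hccont : Continuous c :=
      continuous_const.max (continuous_id.min continuous_const)
    -- the extended integrand
    set F : ℝ → ℝ := fun ξ => |lhat (c ξ) y| with hFdef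
    have hFcont : Continuous F := by
      have : Continuous fun ξ => lhat (c ξ) y := by
        have := hlhat.comp_continuous (f := fun ξ : ℝ => (c ξ, y))
          (hccont.prodMk continuous_const) (fun ξ => ⟨hy0, hcy ξ, hc1 ξ⟩)
        exact this
      exact this.abs
    have hFeq : ∀ ξ, y ≤ ξ → ξ ≤ 1 → F ξ = |lhat ξ y| := by
      intro ξ h1 h2; simp only [hFdef, hceq ξ h1 h2]
    have hFnn : ∀ ξ, 0 ≤ F ξ := fun ξ => abs_nonneg _
    set g : ℝ → ℝ := fun u => ∫ ξ in y..u, F ξ with hgdef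
    have hg' : ∀ t : ℝ, HasDerivAt g (F t) t :=
      fun t => (hFcont.integral_hasStrictDerivAt y t).hasDerivAt
    have hgc : Continuous g := continuous_iff_continuousAt.2 fun t => (hg' t).continuousAt
    have hgnn : ∀ t, y ≤ t → 0 ≤ g t := by
      intro t ht
      exact intervalIntegral.integral_nonneg ht (fun u _ => hFnn u)
    -- the basic integral inequality
    have hstep : ∀ t, y ≤ t → t ≤ x → |lhat t y| ≤ K + K * g t := by
      intro t hyt htx
      have ht1 : t ≤ 1 := htx.trans hx1
      rw [heq t y hy0 hyt ht1]
      have hcont1 : ContinuousOn (fun ξ => khat t ξ * lhat ξ y) (Set.Icc y t) := by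
        have hk : ContinuousOn (fun ξ => khat t ξ) (Set.Icc y t) := by
          have : ContinuousOn ((fun p : ℝ × ℝ => khat p.1 p.2) ∘ (fun ξ : ℝ => (t, ξ)))
              (Set.Icc y t) :=
            hkhat.comp (continuous_const.prodMk continuous_id).continuousOn
              (fun ξ hξ => ⟨hy0.trans hξ.1, hξ.2, ht1⟩)
          exact this
        have hl : ContinuousOn (fun ξ => lhat ξ y) (Set.Icc y t) := by
          have : ContinuousOn ((fun p : ℝ × ℝ => lhat p.1 p.2) ∘ (fun ξ : ℝ => (ξ, y)))
              (Set.Icc y t) :=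
            hlhat.comp (continuous_id.prodMk continuous_const).continuousOn
              (fun ξ hξ => ⟨hy0, hξ.1, hξ.2.trans ht1⟩)
          exact this
        exact hk.mul hl
      have hint1 : IntervalIntegrable (fun ξ => |khat t ξ * lhat ξ y|) volume y t := by
        apply ContinuousOn.intervalIntegrable
        rw [Set.uIcc_of_le hyt]
        exact hcont1.abs
      have hint2 : IntervalIntegrable (fun ξ => K * F ξ) volume y t :=
        (continuous_const.mul hFcont).intervalIntegrable _ _
      have habs : |∫ ξ in y..t, khat t ξ * lhat ξ y| ≤ ∫ ξ in y..t, |khat t ξ * lhat ξ y| :=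
        intervalIntegral.abs_integral_le_integral_abs hyt
      have hmono : (∫ ξ in y..t, |khat t ξ * lhat ξ y|) ≤ ∫ ξ in y..t, K * F ξ := by
        apply intervalIntegral.integral_mono_on hyt hint1 hint2
        intro ξ hξ
        rw [abs_mul, hFeq ξ hξ.1 (hξ.2.trans ht1)]
        exact mul_le_mul_of_nonneg_right (hKb t ξ (hy0.trans hξ.1) hξ.2 ht1) (abs_nonneg _)
      have hKg : (∫ ξ in y..t, K * F ξ) = K * g t := by
        simp only [hgdef]
        exact intervalIntegral.integral_const_mul K F
      calc |khat t y + ∫ ξ in y..t, khat t ξ * lhat ξ y|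
          ≤ |khat t y| + |∫ ξ in y..t, khat t ξ * lhat ξ y| := abs_add_le _ _
        _ ≤ K + K * g t := by
            apply add_le_add (hKb t y hy0 hyt ht1)
            calc |∫ ξ in y..t, khat t ξ * lhat ξ y|
                ≤ ∫ ξ in y..t, |khat t ξ * lhat ξ y| := habs
              _ ≤ ∫ ξ in y..t, K * F ξ := hmono
              _ = K * g t := hKg
    -- Gronwall
    have hgr : ∀ u ∈ Set.Icc y x, ‖g u‖ ≤ gronwallBound 0 K K (u - y) := by
      apply norm_le_gronwallBound_of_norm_deriv_right_le (f' := F)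
        hgc.continuousOn (fun t _ => (hg' t).hasDerivWithinAt)
      · simp only [hgdef, intervalIntegral.integral_same, norm_zero, le_refl]
      · intro t ht
        have ht1 : t ≤ 1 := ht.2.le.trans hx1
        rw [Real.norm_eq_abs, Real.norm_eq_abs, abs_of_nonneg (hFnn t),
          abs_of_nonneg (hgnn t ht.1), hFeq t ht.1 ht1]
        have := hstep t ht.1 ht.2.le
        linarith
    have hgx : g x ≤ gronwallBound 0 K K (x - y) := by
      have := hgr x ⟨hyx, le_refl x⟩
      rwa [Real.norm_eq_abs, abs_of_nonneg (hgnn x hyx)] at this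
    have hfinal : |lhat x y| ≤ K + K * gronwallBound 0 K K (x - y) :=
      (hstep x hyx le_rfl).trans (by nlinarith [mul_le_mul_of_nonneg_left hgx hK0])
    refine hfinal.trans ?_
    rcases eq_or_lt_of_le hK0 with hK | hK
    · rw [← hK]
      simp [gronwallBound_K0]
    · rw [gronwallBound_of_K_ne_0 (ne_of_gt hK)]
      have hs0 : 0 ≤ x - y := by linarith
      have hs1 : x - y ≤ 1 := by linarith
      have hexp : Real.exp (K * (x - y)) ≤ Real.exp K := by
        apply Real.exp_le_exp.2
        nlinarith
      have : K + K * (0 * Real.exp (K * (x - y)) + K / K * (Real.exp (K * (x - y)) - 1))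
          = K * Real.exp (K * (x - y)) := by
        field_simp
        ring
      rw [this]
      exact mul_le_mul_of_nonneg_left hexp hK0
  -- conclude
  apply Real.sSup_le
  · rintro v ⟨p, ⟨h0, h1, h2⟩, rfl⟩
    exact key p.1 p.2 h0 h1 h2
  · exact mul_nonneg hK0 (Real.exp_pos _).le
end

section
/- Let β₁, β₂ : [0,1] → ℝ be continuous with β̄₁ = ‖β₁‖_∞ and β̄₂ = ‖β₂‖_∞, let δβ = β₁ − β₂, and let k₂ be the continuous solution of the backstepping kernel equation k₂(x) = −β₂(x) + ∫₀ˣ β₂(x−y) k₂(y) dy. Define the sequence δk⁰(x) = −δβ(x) + ∫₀ˣ δβ(x−y) k₂(y) dy and δk^{n+1}(x) = ∫₀ˣ β₁(x−y) δkⁿ(y) dy for n ≥ 0. Then for every n ≥ 0 and every x ∈ [0,1], |δkⁿ(x)| ≤ (1 + β̄₂ e^{β̄₂}) ‖δβ‖_∞ β̄₁ⁿ xⁿ / n!. -/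
open MeasureTheory

open intervalIntegral Set in
section

lemma abs_le_supNorm {f : ℝ → ℝ} (hf : ContinuousOn f (Set.Icc 0 1))
    {x : ℝ} (hx : x ∈ Set.Icc (0:ℝ) 1) : |f x| ≤ supNorm f :=
  le_csSup (isCompact_Icc.image_of_continuousOn hf.abs).bddAbove ⟨x, hx, rfl⟩

lemma supNorm_nonneg {f : ℝ → ℝ} (hf : ContinuousOn f (Set.Icc 0 1)) : 0 ≤ supNorm f :=
  (abs_nonneg _).trans (abs_le_supNorm hf ⟨le_refl 0, zero_le_one⟩)

lemma conv_integrable {f g : ℝ → ℝ} (hf : ContinuousOn f (Set.Icc 0 1))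
    (hg : ContinuousOn g (Set.Icc 0 1)) {x : ℝ} (hx : x ∈ Set.Icc (0:ℝ) 1) :
    IntervalIntegrable (fun y => f (x - y) * g y) volume 0 x := by
  apply ContinuousOn.intervalIntegrable
  rw [Set.uIcc_of_le hx.1]
  refine ContinuousOn.mul ?_ (hg.mono (Set.Icc_subset_Icc le_rfl hx.2))
  exact hf.comp (continuous_const.sub continuous_id).continuousOn
    (fun y hy => ⟨by simp; linarith [hy.2], by simp; linarith [hy.1, hx.2]⟩)

lemma key_bound {h φ : ℝ → ℝ} {x : ℝ} (hx : 0 ≤ x)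
    (hh : IntervalIntegrable h volume 0 x) (hφ : IntervalIntegrable φ volume 0 x)
    (hle : ∀ y ∈ Set.Icc 0 x, |h y| ≤ φ y) :
    |∫ y in (0:ℝ)..x, h y| ≤ ∫ y in (0:ℝ)..x, φ y :=
  (intervalIntegral.abs_integral_le_integral_abs hx).trans
    (intervalIntegral.integral_mono_on hx hh.abs hφ hle)

lemma exp_int {B x : ℝ} : B * ∫ y in (0:ℝ)..x, Real.exp (B*y) = Real.exp (B*x) - 1 := by
  rcases eq_or_ne B 0 with h|h
  · simp [h]
  · rw [intervalIntegral.integral_comp_mul_left (fun y => Real.exp y) h]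
    simp [integral_exp]
    field_simp

lemma k2_bound (β₂ k₂ : ℝ → ℝ)
    (hβ₂ : ContinuousOn β₂ (Set.Icc 0 1))
    (hk₂ : ContinuousOn k₂ (Set.Icc 0 1))
    (hk₂eq : ∀ x ∈ Set.Icc (0:ℝ) 1,
      k₂ x = -β₂ x + ∫ y in (0:ℝ)..x, β₂ (x - y) * k₂ y) :
    ∀ x ∈ Set.Icc (0:ℝ) 1, |k₂ x| ≤ supNorm β₂ * Real.exp (supNorm β₂) := by
  set B := supNorm β₂ with hB
  set M := supNorm k₂ with hM
  have hBnn : 0 ≤ B := supNorm_nonneg hβ₂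
  have hMnn : 0 ≤ M := supNorm_nonneg hk₂
  have claim : ∀ n : ℕ, ∀ x ∈ Set.Icc (0:ℝ) 1,
      |k₂ x| ≤ B * Real.exp (B*x) + M * ((B*x)^n / (n.factorial : ℝ)) := by
    intro n
    induction n with
    | zero =>
      intro x hx
      simp only [pow_zero, Nat.factorial_zero, Nat.cast_one, div_one, mul_one]
      have := abs_le_supNorm hk₂ hx
      have : (0:ℝ) ≤ B * Real.exp (B*x) := by positivity
      linarith [abs_le_supNorm hk₂ hx]
    | succ n ih =>
      intro x hx
      rw [hk₂eq x hx]
      have hx0 : (0:ℝ) ≤ x := hx.1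
      set φ : ℝ → ℝ := fun y => B * (B * Real.exp (B*y) + M * ((B*y)^n / (n.factorial : ℝ)))
      have hφcont : Continuous φ := by fun_prop
      have hbd : |∫ y in (0:ℝ)..x, β₂ (x - y) * k₂ y| ≤ ∫ y in (0:ℝ)..x, φ y := by
        apply key_bound hx0 (conv_integrable hβ₂ hk₂ hx) (hφcont.intervalIntegrable _ _)
        intro y hy
        have hy1 : y ∈ Set.Icc (0:ℝ) 1 := ⟨hy.1, hy.2.trans hx.2⟩
        have hxy : x - y ∈ Set.Icc (0:ℝ) 1 := ⟨by linarith [hy.2], by linarith [hy.1, hx.2]⟩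
        rw [abs_mul]
        have h1 := abs_le_supNorm hβ₂ hxy
        have h2 := ih y hy1
        have hnn : (0:ℝ) ≤ B * Real.exp (B*y) + M * ((B*y)^n / (n.factorial : ℝ)) := by
          have : (0:ℝ) ≤ B * y := mul_nonneg hBnn hy.1
          positivity
        exact mul_le_mul h1 h2 (abs_nonneg _) hBnn
      have hintφ : ∫ y in (0:ℝ)..x, φ y
          = B * (Real.exp (B*x) - 1) + M * ((B*x)^(n+1) / ((n+1).factorial : ℝ)) := by
        have e1 : IntervalIntegrable (fun y => B * Real.exp (B*y)) volume 0 x := by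
          apply Continuous.intervalIntegrable; fun_prop
        have e2 : IntervalIntegrable (fun y => M * ((B*y)^n / (n.factorial : ℝ))) volume 0 x := by
          apply Continuous.intervalIntegrable; fun_prop
        have hsplit : ∫ y in (0:ℝ)..x, φ y = B * ((∫ y in (0:ℝ)..x, B * Real.exp (B*y))
            + ∫ y in (0:ℝ)..x, M * ((B*y)^n / (n.factorial : ℝ))) := by
          rw [← intervalIntegral.integral_add e1 e2, ← intervalIntegral.integral_const_mul]
        have hpow : ∫ y in (0:ℝ)..x, (B*y)^n = B^n * (x^(n+1) / (n+1)) := by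
          simp only [mul_pow]
          rw [intervalIntegral.integral_const_mul, integral_pow]
          push_cast; ring
        have hpow2 : ∫ y in (0:ℝ)..x, (B*y)^n / (n.factorial:ℝ)
            = B^n * (x^(n+1)/(n+1)) / (n.factorial:ℝ) := by
          rw [intervalIntegral.integral_div, hpow]
        rw [hsplit, intervalIntegral.integral_const_mul, intervalIntegral.integral_const_mul,
          exp_int, hpow2]
        have hfac : ((n+1).factorial : ℝ) = (n+1) * (n.factorial : ℝ) := by
          push_cast [Nat.factorial_succ]; ring
        rw [hfac]
        have hne : (n.factorial : ℝ) ≠ 0 := Nat.cast_ne_zero.mpr n.factorial_ne_zero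
        have hne2 : (n:ℝ) + 1 ≠ 0 := by positivity
        field_simp
        ring
      calc |(-β₂ x + ∫ y in (0:ℝ)..x, β₂ (x - y) * k₂ y)|
          ≤ |β₂ x| + |∫ y in (0:ℝ)..x, β₂ (x - y) * k₂ y| := by
            rw [← abs_neg (β₂ x)]; exact abs_add_le _ _
        _ ≤ B + (B * (Real.exp (B*x) - 1) + M * ((B*x)^(n+1) / ((n+1).factorial : ℝ))) := by
            rw [← hintφ]; exact add_le_add (abs_le_supNorm hβ₂ hx) hbd
        _ = B * Real.exp (B*x) + M * ((B*x)^(n+1) / ((n+1).factorial : ℝ)) := by ring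
  intro x hx
  have hlim : Filter.Tendsto (fun n : ℕ => B * Real.exp (B*x) + M * ((B*x)^n / (n.factorial : ℝ)))
      Filter.atTop (nhds (B * Real.exp (B*x))) := by
    have := (FloorSemiring.tendsto_pow_div_factorial_atTop (B*x)).const_mul M
    simpa using Filter.Tendsto.add (tendsto_const_nhds : Filter.Tendsto _ _ (nhds (B * Real.exp (B*x)))) this
  have h1 : |k₂ x| ≤ B * Real.exp (B*x) := ge_of_tendsto' hlim (fun n => claim n x hx)
  refine h1.trans (mul_le_mul_of_nonneg_left ?_ hBnn)
  exact Real.exp_le_exp.mpr (by nlinarith [hx.1, hx.2])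


end


/-- bound on the successive-approximation terms δkⁿ for the difference
of two backstepping kernels:
|δkⁿ(x)| ≤ (1 + β̄₂ e^{β̄₂}) ‖δβ‖_∞ β̄₁ⁿ xⁿ / n!. -/
theorem delta_k_difference_bound (β₁ β₂ k₂ : ℝ → ℝ)
    (hβ₁ : ContinuousOn β₁ (Set.Icc 0 1))
    (hβ₂ : ContinuousOn β₂ (Set.Icc 0 1))
    (hk₂ : ContinuousOn k₂ (Set.Icc 0 1))
    (hk₂eq : ∀ x ∈ Set.Icc (0:ℝ) 1,
      k₂ x = -β₂ x + ∫ y in (0:ℝ)..x, β₂ (x - y) * k₂ y)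
    (δk : ℕ → ℝ → ℝ)
    (hcont : ∀ n, ContinuousOn (δk n) (Set.Icc 0 1))
    (h0 : ∀ x ∈ Set.Icc (0:ℝ) 1,
      δk 0 x = -(β₁ x - β₂ x) + ∫ y in (0:ℝ)..x, (β₁ (x - y) - β₂ (x - y)) * k₂ y)
    (hrec : ∀ n, ∀ x ∈ Set.Icc (0:ℝ) 1,
      δk (n + 1) x = ∫ y in (0:ℝ)..x, β₁ (x - y) * δk n y) :
    ∀ n, ∀ x ∈ Set.Icc (0:ℝ) 1,
      |δk n x| ≤ (1 + supNorm β₂ * Real.exp (supNorm β₂)) *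
        supNorm (fun x => β₁ x - β₂ x) * supNorm β₁ ^ n * x ^ n / (n.factorial : ℝ) := by
  set B := supNorm β₂ with hB
  set B1 := supNorm β₁ with hB1
  set D := supNorm (fun x => β₁ x - β₂ x) with hD
  set C := 1 + B * Real.exp B with hC
  have hδβ : ContinuousOn (fun x => β₁ x - β₂ x) (Set.Icc 0 1) := hβ₁.sub hβ₂
  have hBnn : 0 ≤ B := supNorm_nonneg hβ₂
  have hB1nn : 0 ≤ B1 := supNorm_nonneg hβ₁
  have hDnn : 0 ≤ D := supNorm_nonneg hδβ
  have hCnn : (0:ℝ) ≤ C := by have := Real.exp_pos B; rw [hC]; positivity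
  have hK : ∀ y ∈ Set.Icc (0:ℝ) 1, |k₂ y| ≤ B * Real.exp B := k2_bound β₂ k₂ hβ₂ hk₂ hk₂eq
  intro n
  induction n with
  | zero =>
    intro x hx
    have hx0 : (0:ℝ) ≤ x := hx.1
    rw [h0 x hx]
    simp only [pow_zero, Nat.factorial_zero, Nat.cast_one, div_one, mul_one]
    have hbd : |∫ y in (0:ℝ)..x, (β₁ (x - y) - β₂ (x - y)) * k₂ y|
        ≤ ∫ y in (0:ℝ)..x, D * (B * Real.exp B) := by
      apply key_bound hx0 (conv_integrable hδβ hk₂ hx)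
        ((continuous_const).intervalIntegrable _ _)
      intro y hy
      have hy1 : y ∈ Set.Icc (0:ℝ) 1 := ⟨hy.1, hy.2.trans hx.2⟩
      have hxy : x - y ∈ Set.Icc (0:ℝ) 1 := ⟨by linarith [hy.2], by linarith [hy.1, hx.2]⟩
      rw [abs_mul]
      exact mul_le_mul (abs_le_supNorm hδβ hxy) (hK y hy1) (abs_nonneg _) hDnn
    rw [intervalIntegral.integral_const, smul_eq_mul] at hbd
    have h1 : |(-(β₁ x - β₂ x) + ∫ y in (0:ℝ)..x, (β₁ (x - y) - β₂ (x - y)) * k₂ y)|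
        ≤ |β₁ x - β₂ x| + |∫ y in (0:ℝ)..x, (β₁ (x - y) - β₂ (x - y)) * k₂ y| := by
      rw [← abs_neg (β₁ x - β₂ x)]; exact abs_add_le _ _
    have h2 := abs_le_supNorm hδβ hx
    have h3 : (x - 0) * (D * (B * Real.exp B)) ≤ D * (B * Real.exp B) := by
      have : (0:ℝ) ≤ D * (B * Real.exp B) := by positivity
      nlinarith [hx.2]
    calc |(-(β₁ x - β₂ x) + ∫ y in (0:ℝ)..x, (β₁ (x - y) - β₂ (x - y)) * k₂ y)|
        ≤ D + (x - 0) * (D * (B * Real.exp B)) := by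
          refine h1.trans (add_le_add h2 ?_)
          simpa using hbd
      _ ≤ D + D * (B * Real.exp B) := by linarith
      _ = C * D := by rw [hC]; ring
  | succ n ih =>
    intro x hx
    have hx0 : (0:ℝ) ≤ x := hx.1
    rw [hrec n x hx]
    set φ : ℝ → ℝ := fun y => B1 * (C * D * B1^n * y^n / (n.factorial : ℝ))
    have hbd : |∫ y in (0:ℝ)..x, β₁ (x - y) * δk n y| ≤ ∫ y in (0:ℝ)..x, φ y := by
      apply key_bound hx0 (conv_integrable hβ₁ (hcont n) hx)
      · apply Continuous.intervalIntegrable; fun_prop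
      intro y hy
      have hy1 : y ∈ Set.Icc (0:ℝ) 1 := ⟨hy.1, hy.2.trans hx.2⟩
      have hxy : x - y ∈ Set.Icc (0:ℝ) 1 := ⟨by linarith [hy.2], by linarith [hy.1, hx.2]⟩
      rw [abs_mul]
      exact mul_le_mul (abs_le_supNorm hβ₁ hxy) (ih y hy1) (abs_nonneg _) hB1nn
    have hintφ : ∫ y in (0:ℝ)..x, φ y
        = C * D * B1^(n+1) * x^(n+1) / ((n+1).factorial : ℝ) := by
      show (∫ y in (0:ℝ)..x, B1 * (C * D * B1^n * y^n / (n.factorial : ℝ))) = _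
      have : ∀ y : ℝ, B1 * (C * D * B1^n * y^n / (n.factorial : ℝ))
          = (B1 * C * D * B1^n / (n.factorial : ℝ)) * y^n := by intro y; ring
      simp only [this]
      rw [intervalIntegral.integral_const_mul, integral_pow]
      have hfac : ((n+1).factorial : ℝ) = (n+1) * (n.factorial : ℝ) := by
        push_cast [Nat.factorial_succ]; ring
      rw [hfac]
      have hne : (n.factorial : ℝ) ≠ 0 := Nat.cast_ne_zero.mpr n.factorial_ne_zero
      have hne2 : (n:ℝ) + 1 ≠ 0 := by positivity
      field_simp
      ring
    rw [← hintφ]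
    exact hbd
end
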